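/- Let S = (P, L) be a generalized quadrangle of order (2,t) and let (R, ψ) be a faithful representation of S. If S contains a 3-arc T = {a,b,c} such that r_a r_b r_c ∈ R_ψ, then t = 2 and |R| = 2^4; moreover, in this case T is an incomplete 3-arc. -/

import Mathlib

open scoped Classical

/-- A slim partial linear space: a nonempty point set, a nonempty collection of
lines each of which is a 3-element set of points, such that any two distinct
points lie in at most one common line. -/
structure SlimPLS (P : Type*) where
  lines : Set (Finset P)
  nonempty_pts : Nonempty P
  nonempty_lines : lines.Nonempty
  three_points : ∀ l ∈ lines, l.card = 3
  unique_line : ∀ l₁ ∈ lines, ∀ l₂ ∈ lines, ∀ x y : P,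
    x ≠ y → x ∈ l₁ → y ∈ l₁ → x ∈ l₂ → y ∈ l₂ → l₁ = l₂

namespace SlimPLS

variable {P : Type*}

/-- Two points are collinear if they are distinct and lie on a common line. -/
def Collinear (S : SlimPLS P) (x y : P) : Prop :=
  x ≠ y ∧ ∃ l ∈ S.lines, x ∈ l ∧ y ∈ l

/-- The collinearity graph of a slim partial linear space. -/
def graph (S : SlimPLS P) : SimpleGraph P where
  Adj x y := S.Collinear x y
  symm := ⟨fun x y h => ⟨Ne.symm h.1, h.2.elim fun l hl => ⟨l, hl.1, hl.2.2, hl.2.1⟩⟩⟩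
  loopless := ⟨fun x h => h.1 rfl⟩

/-- `S` is a generalized quadrangle of order `(2, t)`: it is connected, no point
is collinear with all other points, every point is on exactly `t+1` lines, and
for every point `x` and line `l` with `x ∉ l` there is exactly one point of `l`
collinear with `x`. -/
def IsGQ (S : SlimPLS P) (t : ℕ) : Prop :=
  S.graph.Connected ∧
  (∀ x : P, ∃ y : P, y ≠ x ∧ ¬ S.Collinear x y) ∧
  (∀ x : P, {l | l ∈ S.lines ∧ x ∈ l}.ncard = t + 1) ∧
  (∀ x : P, ∀ l ∈ S.lines, x ∉ l → ∃! y : P, y ∈ l ∧ S.Collinear x y)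

/-- A set of points is an arc if its points are pairwise non-collinear. -/
def IsArc (S : SlimPLS P) (T : Set P) : Prop :=
  ∀ x ∈ T, ∀ y ∈ T, x ≠ y → ¬ S.Collinear x y

/-- `{a,b,c}` is a complete 3-arc: three pairwise distinct, pairwise
non-collinear points not contained in a 4-arc. -/
def Complete3Arc (S : SlimPLS P) (a b c : P) : Prop :=
  a ≠ b ∧ a ≠ c ∧ b ≠ c ∧ S.IsArc {a, b, c} ∧
  ∀ d : P, d ∉ ({a, b, c} : Set P) → ¬ S.IsArc (insert d {a, b, c})

/-- `{a,b,c}` is a complete 3-arc of the subset `Q`: three pairwise distinct,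
pairwise non-collinear points of `Q` not contained in a 4-arc inside `Q`. -/
def Complete3ArcIn (S : SlimPLS P) (Q : Set P) (a b c : P) : Prop :=
  a ∈ Q ∧ b ∈ Q ∧ c ∈ Q ∧ a ≠ b ∧ a ≠ c ∧ b ≠ c ∧ S.IsArc {a, b, c} ∧
  ∀ d ∈ Q, d ∉ ({a, b, c} : Set P) → ¬ S.IsArc (insert d {a, b, c})

/-- `Q` is a sub-generalized-quadrangle of order `(2,t)` of `S`: together with
the lines of `S` contained in it, `Q` is a `(2,t)`-GQ; in particular any line
meeting `Q` in at least two points is contained in `Q`. -/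
def IsSubGQ (S : SlimPLS P) (Q : Set P) (t : ℕ) : Prop :=
  Q.Nonempty ∧
  (∃ l ∈ S.lines, (l : Set P) ⊆ Q) ∧
  (∀ l ∈ S.lines, ∀ x ∈ l, ∀ y ∈ l, x ≠ y → x ∈ Q → y ∈ Q → (l : Set P) ⊆ Q) ∧
  (SimpleGraph.induce Q S.graph).Connected ∧
  (∀ x ∈ Q, ∃ y ∈ Q, y ≠ x ∧ ¬ S.Collinear x y) ∧
  (∀ x ∈ Q, {l | l ∈ S.lines ∧ x ∈ l ∧ (l : Set P) ⊆ Q}.ncard = t + 1) ∧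
  (∀ x ∈ Q, ∀ l ∈ S.lines, (l : Set P) ⊆ Q → x ∉ l → ∃! y : P, y ∈ l ∧ S.Collinear x y)

/-- `S` is a near hexagon: connected of diameter 3, no point collinear with all
other points, and for every point `x` and line `l` there is a unique point of
`l` nearest to `x`. -/
def IsNearHexagon (S : SlimPLS P) : Prop :=
  S.graph.Connected ∧
  (∀ x y : P, S.graph.dist x y ≤ 3) ∧
  (∃ x y : P, S.graph.dist x y = 3) ∧
  (∀ x : P, ∃ y : P, y ≠ x ∧ ¬ S.Collinear x y) ∧
  (∀ x : P, ∀ l ∈ S.lines, ∃! y : P, y ∈ l ∧ ∀ z ∈ l, S.graph.dist x y ≤ S.graph.dist x z)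

/-- `S` is dense: any two points at distance 2 have at least two common
neighbours. -/
def IsDense (S : SlimPLS P) : Prop :=
  ∀ x y : P, S.graph.dist x y = 2 →
    ∃ u v : P, u ≠ v ∧ S.Collinear x u ∧ S.Collinear u y ∧ S.Collinear x v ∧ S.Collinear v y

/-- `Q` is a quad: a convex subset of diameter 2 in which no point is collinear
with all other points of `Q`. -/
def IsQuad (S : SlimPLS P) (Q : Set P) : Prop :=
  (∀ u ∈ Q, ∀ v ∈ Q, ∀ w : P,
      S.graph.dist u w + S.graph.dist w v = S.graph.dist u v → w ∈ Q) ∧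
  (∀ u ∈ Q, ∀ v ∈ Q, S.graph.dist u v ≤ 2) ∧
  (∃ u ∈ Q, ∃ v ∈ Q, S.graph.dist u v = 2) ∧
  (∀ u ∈ Q, ∃ v ∈ Q, v ≠ u ∧ ¬ S.Collinear u v)

/-- A quad `Q` is of type `(2, t₂)` if every point of `Q` lies on exactly
`t₂ + 1` lines contained in `Q`. -/
def QuadType (S : SlimPLS P) (Q : Set P) (t₂ : ℕ) : Prop :=
  ∀ x ∈ Q, {l | l ∈ S.lines ∧ x ∈ l ∧ (l : Set P) ⊆ Q}.ncard = t₂ + 1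

/-- The point-quad pair `(x, Q)` is classical: there is a unique point `y ∈ Q`
nearest to `x`, with `d(x,z) = d(x,y) + d(y,z)` for all `z ∈ Q`. -/
def IsClassicalPair (S : SlimPLS P) (x : P) (Q : Set P) : Prop :=
  ∃! y : P, y ∈ Q ∧ ∀ z ∈ Q, S.graph.dist x z = S.graph.dist x y + S.graph.dist y z

/-- A quad is classical (big) if every point-quad pair with it is classical. -/
def IsClassicalQuad (S : SlimPLS P) (Q : Set P) : Prop :=
  ∀ x : P, S.IsClassicalPair x Q

/-- A subspace: any line containing two of its points is contained in it. -/
def IsSubspace (S : SlimPLS P) (X : Set P) : Prop :=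
  ∀ l ∈ S.lines, ∀ x ∈ l, ∀ y ∈ l, x ≠ y → x ∈ X → y ∈ X → (l : Set P) ⊆ X

/-- The subspace generated by a set of points. -/
def subspaceGen (S : SlimPLS P) (A : Set P) : Set P :=
  ⋂₀ {X | S.IsSubspace X ∧ A ⊆ X}

/-- `NPdim S` is the rank over `F₂` of the distance-3 adjacency matrix. -/
noncomputable def NPdim [Fintype P] (S : SlimPLS P) : ℕ :=
  Matrix.rank (Matrix.of fun x y : P => if S.graph.dist x y = 3 then (1 : ZMod 2) else 0)

/-- `dimV S` is the dimension of the universal representation module of `S`: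
the free `F₂`-vector space on the points modulo the span of the elements
`v_x + v_y + v_z` for the lines `{x,y,z}`. -/
noncomputable def dimV (S : SlimPLS P) : ℕ :=
  Module.finrank (ZMod 2)
    ((P →₀ ZMod 2) ⧸ Submodule.span (ZMod 2)
      {f : P →₀ ZMod 2 | ∃ l ∈ S.lines, f = ∑ x ∈ l, Finsupp.single x 1})

end SlimPLS

/-- A representation of a slim partial linear space `S`: an assignment of an
order-2 element `r x` of `R` to each point `x`, such that the images generate
`R` and for every line `{x,y,z}` the set `{1, r x, r y, r z}` is a Klein four
subgroup (`r x * r y = r z` for the three pairwise distinct points of a line). -/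
structure SlimPLS.Rep {P : Type*} (S : SlimPLS P) (R : Type*) [Group R] where
  r : P → R
  order_two : ∀ x : P, orderOf (r x) = 2
  gen : Subgroup.closure (Set.range r) = ⊤
  line_rel : ∀ l ∈ S.lines, ∀ x ∈ l, ∀ y ∈ l, ∀ z ∈ l,
    x ≠ y → x ≠ z → y ≠ z → r x * r y = r z

/-- A finite 2-group is extraspecial if its Frattini subgroup, commutator
subgroup and center coincide and have order 2. -/
def IsExtraspecial (G : Type*) [Group G] : Prop :=
  Finite G ∧ IsPGroup 2 G ∧ frattini G = commutator G ∧
    commutator G = Subgroup.center G ∧ Nat.card (Subgroup.center G) = 2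

/-! ### Auxiliary machinery for the main theorem -/

namespace SlimPLS

variable {P : Type*} {S : SlimPLS P}

lemma Collinear.symm {x y : P} (h : S.Collinear x y) : S.Collinear y x := by
  obtain ⟨hne, l, hl, hx, hy⟩ := h
  exact ⟨hne.symm, l, hl, hy, hx⟩

lemma Collinear.ne {x y : P} (h : S.Collinear x y) : x ≠ y := h.1

lemma ncol_symm {x y : P} (h : ¬ S.Collinear x y) : ¬ S.Collinear y x :=
  fun hc => h hc.symm

lemma col_of_mem {l : Finset P} (hl : l ∈ S.lines) {x y : P} (hx : x ∈ l) (hy : y ∈ l)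
    (hxy : x ≠ y) : S.Collinear x y := ⟨hxy, l, hl, hx, hy⟩

noncomputable def lineOf (S : SlimPLS P) (x y : P) : Finset P :=
  if h : S.Collinear x y then h.2.choose else ∅

lemma lineOf_mem {x y : P} (h : S.Collinear x y) : S.lineOf x y ∈ S.lines := by
  rw [lineOf, dif_pos h]; exact h.2.choose_spec.1

lemma left_mem_lineOf {x y : P} (h : S.Collinear x y) : x ∈ S.lineOf x y := by
  rw [lineOf, dif_pos h]; exact h.2.choose_spec.2.1

lemma right_mem_lineOf {x y : P} (h : S.Collinear x y) : y ∈ S.lineOf x y := by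
  rw [lineOf, dif_pos h]; exact h.2.choose_spec.2.2

lemma lineOf_unique {x y : P} (h : S.Collinear x y) {l : Finset P} (hl : l ∈ S.lines)
    (hx : x ∈ l) (hy : y ∈ l) : l = S.lineOf x y :=
  S.unique_line l hl _ (lineOf_mem h) x y h.1 hx hy (left_mem_lineOf h) (right_mem_lineOf h)

lemma exists_third_aux {x y : P} (h : S.Collinear x y) :
    ∃ z, z ≠ x ∧ z ≠ y ∧ S.lineOf x y = {x, y, z} := by
  classical
  have hl := lineOf_mem h
  have hcard := S.three_points _ hl
  have hx := left_mem_lineOf h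
  have hy := right_mem_lineOf h
  have h1 : y ∈ (S.lineOf x y).erase x := Finset.mem_erase.2 ⟨h.1.symm, hy⟩
  have h2 : (((S.lineOf x y).erase x).erase y).card = 1 := by
    rw [Finset.card_erase_of_mem h1, Finset.card_erase_of_mem hx, hcard]
  obtain ⟨z, hz⟩ := Finset.card_eq_one.1 h2
  have hzmem : z ∈ ((S.lineOf x y).erase x).erase y := hz ▸ Finset.mem_singleton_self z
  have hzy : z ≠ y := (Finset.mem_erase.1 hzmem).1
  have hzx : z ≠ x := (Finset.mem_erase.1 (Finset.mem_erase.1 hzmem).2).1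
  have hzl : z ∈ S.lineOf x y := (Finset.mem_erase.1 (Finset.mem_erase.1 hzmem).2).2
  refine ⟨z, hzx, hzy, ?_⟩
  have hsub : ({x, y, z} : Finset P) ⊆ S.lineOf x y := by
    intro w hw
    simp only [Finset.mem_insert, Finset.mem_singleton] at hw
    rcases hw with rfl | rfl | rfl <;> assumption
  have hcard' : ({x, y, z} : Finset P).card = 3 := by
    rw [Finset.card_insert_of_notMem, Finset.card_insert_of_notMem, Finset.card_singleton]
    · simp [hzy.symm]
    · simp [h.1, hzx.symm]
  exact (Finset.eq_of_subset_of_card_le hsub (by rw [hcard, hcard'])).symm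

noncomputable def third (S : SlimPLS P) (x y : P) : P :=
  if h : S.Collinear x y then (exists_third_aux h).choose else x

lemma third_spec {x y : P} (h : S.Collinear x y) :
    S.third x y ≠ x ∧ S.third x y ≠ y ∧ S.lineOf x y = {x, y, S.third x y} := by
  rw [third, dif_pos h]
  exact (exists_third_aux h).choose_spec

lemma third_ne_left {x y : P} (h : S.Collinear x y) : S.third x y ≠ x := (third_spec h).1

lemma third_ne_right {x y : P} (h : S.Collinear x y) : S.third x y ≠ y := (third_spec h).2.1

lemma mem_lineOf_iff {x y z : P} (h : S.Collinear x y) :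
    z ∈ S.lineOf x y ↔ z = x ∨ z = y ∨ z = S.third x y := by
  rw [(third_spec h).2.2]; simp

lemma third_mem {x y : P} (h : S.Collinear x y) : S.third x y ∈ S.lineOf x y := by
  rw [mem_lineOf_iff h]; tauto

lemma col_third_left {x y : P} (h : S.Collinear x y) : S.Collinear x (S.third x y) :=
  col_of_mem (lineOf_mem h) (left_mem_lineOf h) (third_mem h) (third_ne_left h).symm

lemma col_third_right {x y : P} (h : S.Collinear x y) : S.Collinear y (S.third x y) :=
  col_of_mem (lineOf_mem h) (right_mem_lineOf h) (third_mem h) (third_ne_right h).symm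

lemma third_eq_of_mem {u v z : P} (h : S.Collinear u v) {l : Finset P} (hl : l ∈ S.lines)
    (hu : u ∈ l) (hv : v ∈ l) (hz : z ∈ l) (hzu : z ≠ u) (hzv : z ≠ v) :
    z = S.third u v := by
  have hlo := lineOf_unique h hl hu hv
  rw [hlo, mem_lineOf_iff h] at hz
  tauto

lemma lineOf_comm {x y : P} (h : S.Collinear x y) : S.lineOf x y = S.lineOf y x :=
  lineOf_unique h.symm (lineOf_mem h) (right_mem_lineOf h) (left_mem_lineOf h)

lemma third_comm {x y : P} (h : S.Collinear x y) : S.third x y = S.third y x :=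
  third_eq_of_mem h.symm (lineOf_mem h) (right_mem_lineOf h) (left_mem_lineOf h)
    (third_mem h) (third_ne_right h) (third_ne_left h)

lemma third_rotate {x y : P} (h : S.Collinear x y) : S.third x (S.third x y) = y :=
  (third_eq_of_mem (col_third_left h) (lineOf_mem h) (left_mem_lineOf h) (third_mem h)
    (right_mem_lineOf h) h.ne.symm (third_ne_right h).symm).symm

lemma third_other {x y : P} (h : S.Collinear x y) : S.third y (S.third x y) = x :=
  (third_eq_of_mem (col_third_right h) (lineOf_mem h) (right_mem_lineOf h) (third_mem h)
    (left_mem_lineOf h) h.ne (third_ne_left h).symm).symm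

section RepLemmas

variable {R : Type*} [Group R] (ρ : S.Rep R)

lemma r_sq (x : P) : ρ.r x * ρ.r x = 1 := by
  have h := pow_orderOf_eq_one (ρ.r x)
  rwa [ρ.order_two x, pow_two] at h

lemma r_ne_one (x : P) : ρ.r x ≠ 1 := by
  intro h
  have := ρ.order_two x
  rw [h, orderOf_one] at this
  omega

lemma r_inv (x : P) : (ρ.r x)⁻¹ = ρ.r x := inv_eq_of_mul_eq_one_right (r_sq ρ x)

lemma r_third {x y : P} (h : S.Collinear x y) :
    ρ.r x * ρ.r y = ρ.r (S.third x y) :=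
  ρ.line_rel _ (lineOf_mem h) x (left_mem_lineOf h) y (right_mem_lineOf h)
    (S.third x y) (third_mem h) h.1 (third_ne_left h).symm (third_ne_right h).symm

lemma r_comm {x y : P} (h : S.Collinear x y) : ρ.r x * ρ.r y = ρ.r y * ρ.r x := by
  rw [r_third ρ h, r_third ρ h.symm, third_comm h]

end RepLemmas

section GQLemmas

variable {t : ℕ} (hGQ : S.IsGQ t)

include hGQ

/-- No triangles: if `x` is collinear with two points of a line, it is the third point. -/
lemma triangle {x y z : P} (hyz : S.Collinear y z) (hxy : S.Collinear x y)
    (hxz : S.Collinear x z) : x = S.third y z := by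
  by_contra hne
  have hxl : x ∉ S.lineOf y z := by
    rw [mem_lineOf_iff hyz]
    push_neg
    exact ⟨hxy.ne, hxz.ne, hne⟩
  obtain ⟨w, hw, huniq⟩ := hGQ.2.2.2 x _ (lineOf_mem hyz) hxl
  have h1 := huniq y ⟨left_mem_lineOf hyz, hxy⟩
  have h2 := huniq z ⟨right_mem_lineOf hyz, hxz⟩
  exact hyz.ne (h1 ▸ h2 ▸ rfl)

/-- Helper: conclude non-collinearity from the triangle lemma. -/
lemma notCol {x y z p : P} (hyz : S.Collinear y z) (hxy : S.Collinear x y)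
    (hp : S.third y z = p) (hxp : x ≠ p) : ¬ S.Collinear x z :=
  fun h => hxp (hp ▸ triangle hGQ hyz hxy h)

lemma gq_cases {x y z : P} (hyz : S.Collinear y z) (h1 : x ≠ y) (h2 : x ≠ z)
    (h3 : x ≠ S.third y z) :
    S.Collinear x y ∨ S.Collinear x z ∨ S.Collinear x (S.third y z) := by
  have hxl : x ∉ S.lineOf y z := by
    rw [mem_lineOf_iff hyz]; push_neg; exact ⟨h1, h2, h3⟩
  obtain ⟨w, ⟨hwl, hw⟩, _⟩ := hGQ.2.2.2 x _ (lineOf_mem hyz) hxl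
  rw [mem_lineOf_iff hyz] at hwl
  rcases hwl with rfl | rfl | rfl
  · exact Or.inl hw
  · exact Or.inr (Or.inl hw)
  · exact Or.inr (Or.inr hw)

lemma linesThrough_finite (x : P) : {l | l ∈ S.lines ∧ x ∈ l}.Finite := by
  by_contra hinf
  have := Set.Infinite.ncard hinf
  rw [hGQ.2.2.1 x] at this
  omega

lemma exists_line_through (x : P) : ∃ l ∈ S.lines, x ∈ l := by
  have h := hGQ.2.2.1 x
  have : {l | l ∈ S.lines ∧ x ∈ l}.Nonempty := by
    apply Set.nonempty_of_ncard_ne_zero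
    rw [h]; omega
  obtain ⟨l, hl⟩ := this
  exact ⟨l, hl.1, hl.2⟩

/-- For a noncollinear pair of distinct points, there is a common neighbour. -/
lemma exists_cn {x y : P} (hxy : ¬ S.Collinear x y) (hne : x ≠ y) :
    ∃ w, S.Collinear w x ∧ S.Collinear w y := by
  obtain ⟨l, hl, hxl⟩ := exists_line_through hGQ x
  have hyl : y ∉ l := fun hyl => hxy (col_of_mem hl hxl hyl hne)
  obtain ⟨w, ⟨hwl, hw⟩, _⟩ := hGQ.2.2.2 y l hl hyl
  have hwx : w ≠ x := fun h => hxy (h ▸ hw).symm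
  exact ⟨w, col_of_mem hl hwl hxl hwx, hw.symm⟩

lemma t_pos : 1 ≤ t := by
  by_contra ht
  have ht0 : t = 0 := by omega
  obtain ⟨l, hl⟩ := S.nonempty_lines
  have : l.Nonempty := Finset.card_pos.1 (by rw [S.three_points l hl]; omega)
  obtain ⟨x, hx⟩ := this
  obtain ⟨y, hyx, hxy⟩ := hGQ.2.1 x
  have hyl : y ∉ l := fun hyl => hxy (col_of_mem hl hx hyl (Ne.symm hyx))
  obtain ⟨w, ⟨hwl, hw⟩, _⟩ := hGQ.2.2.2 y l hl hyl
  -- the line joining w and y is a second line through w, but w is on only one line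
  have hone : {m | m ∈ S.lines ∧ w ∈ m}.ncard = 1 := by rw [hGQ.2.2.1 w, ht0]
  obtain ⟨m, hm⟩ := Set.ncard_eq_one.1 hone
  have h1 : l ∈ {m | m ∈ S.lines ∧ w ∈ m} := ⟨hl, hwl⟩
  have h2 : S.lineOf w y ∈ {m | m ∈ S.lines ∧ w ∈ m} :=
    ⟨lineOf_mem hw.symm, left_mem_lineOf hw.symm⟩
  rw [hm, Set.mem_singleton_iff] at h1 h2
  have : y ∈ l := by
    rw [h1, ← h2]
    exact right_mem_lineOf hw.symm
  exact hyl this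

/-- Common neighbours of two noncollinear points are pairwise noncollinear. -/
lemma cn_pairwise {x y w w' : P} (hxy : ¬ S.Collinear x y) (hnexy : x ≠ y)
    (hwx : S.Collinear w x) (hwy : S.Collinear w y)
    (hw'x : S.Collinear w' x) (hw'y : S.Collinear w' y) (hne : w ≠ w') :
    ¬ S.Collinear w w' := by
  intro hcol
  have h1 : w' = S.third w x := triangle hGQ hwx hcol.symm hw'x
  have h2 : w' = S.third w y := triangle hGQ hwy hcol.symm hw'y
  have hltwo : S.lineOf w y = S.lineOf w x :=
    S.unique_line _ (lineOf_mem hwy) _ (lineOf_mem hwx) w w' hne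
      (left_mem_lineOf hwy) (by rw [h2]; exact third_mem hwy)
      (left_mem_lineOf hwx) (by rw [h1]; exact third_mem hwx)
  have hy : y ∈ S.lineOf w x := hltwo ▸ right_mem_lineOf hwy
  rw [mem_lineOf_iff hwx] at hy
  rcases hy with rfl | rfl | rfl
  · exact hwy.ne rfl
  · exact hnexy rfl
  · exact hxy (col_third_right hwx)

end GQLemmas

end SlimPLS


section GQCounting

namespace SlimPLS

variable {P : Type*} {S : SlimPLS P}

lemma line_two_points {l : Finset P} (hl : l ∈ S.lines) {d : P} (hd : d ∈ l) :
    ∃ p, S.Collinear d p ∧ l = S.lineOf d p := by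
  have hne : (l.erase d).Nonempty := by
    apply Finset.card_pos.1
    rw [Finset.card_erase_of_mem hd, S.three_points l hl]
    omega
  obtain ⟨p, hp⟩ := hne
  have hpd := (Finset.mem_erase.1 hp).1
  have hpl := (Finset.mem_erase.1 hp).2
  have hcol : S.Collinear d p := col_of_mem hl hd hpl (Ne.symm hpd)
  exact ⟨p, hcol, lineOf_unique hcol hl hd hpl⟩

variable {t : ℕ} (hGQ : S.IsGQ t)

include hGQ

lemma cn_ncard_finite {x y : P} (hxy : ¬ S.Collinear x y) (hne : x ≠ y) :
    {w | S.Collinear w x ∧ S.Collinear w y}.ncard = t + 1 ∧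
      {w | S.Collinear w x ∧ S.Collinear w y}.Finite := by
  classical
  set CN := {w | S.Collinear w x ∧ S.Collinear w y} with hCN
  have hinj : Set.InjOn (fun w => S.lineOf x w) CN := by
    intro w hw w' hw' heq
    by_contra hneww
    have hxw : S.Collinear x w := hw.1.symm
    have hxw' : S.Collinear x w' := hw'.1.symm
    have hm : w' ∈ S.lineOf x w := by
      simp only at heq
      rw [heq]; exact right_mem_lineOf hxw'
    rw [mem_lineOf_iff hxw] at hm
    rcases hm with rfl | rfl | rfl
    · exact hxw'.ne rfl
    · exact hneww rfl
    · exact cn_pairwise hGQ hxy hne hw.1 hw.2 hw'.1 hw'.2 (fun h => hneww h)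
        (col_of_mem (lineOf_mem hxw) (right_mem_lineOf hxw) (third_mem hxw)
          (third_ne_right hxw).symm)
  have himg : (fun w => S.lineOf x w) '' CN = {l | l ∈ S.lines ∧ x ∈ l} := by
    apply Set.Subset.antisymm
    · rintro l ⟨w, hw, rfl⟩
      exact ⟨lineOf_mem hw.1.symm, left_mem_lineOf hw.1.symm⟩
    · rintro l ⟨hl, hxl⟩
      have hyl : y ∉ l := fun hyl => hxy (col_of_mem hl hxl hyl hne)
      obtain ⟨w, ⟨hwl, hw⟩, _⟩ := hGQ.2.2.2 y l hl hyl
      have hwx : w ≠ x := fun h => hxy (h ▸ hw).symm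
      refine ⟨w, ⟨col_of_mem hl hwl hxl hwx, hw.symm⟩, ?_⟩
      exact (lineOf_unique (col_of_mem hl hxl hwl hwx.symm) hl hxl hwl).symm
  have hLTfin := linesThrough_finite hGQ x
  have hfin : CN.Finite := Set.Finite.of_finite_image (himg ▸ hLTfin) hinj
  constructor
  · rw [← Set.ncard_image_of_injOn hinj, himg, hGQ.2.2.1 x]
  · exact hfin

lemma line_meets {z g : P} {W : Set P} (hfin : W.Finite) (hW : W.ncard = t + 1)
    (hcol : ∀ w ∈ W, S.Collinear z w)
    (hpair : ∀ w ∈ W, ∀ w' ∈ W, w ≠ w' → ¬ S.Collinear w w')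
    (hg : S.Collinear z g) : ∃ w ∈ W, g = w ∨ g = S.third z w := by
  classical
  have hinj : Set.InjOn (fun w => S.lineOf z w) W := by
    intro w hw w' hw' heq
    by_contra hneww
    have hzw : S.Collinear z w := hcol w hw
    have hzw' : S.Collinear z w' := hcol w' hw'
    have hm : w' ∈ S.lineOf z w := by
      simp only at heq
      rw [heq]; exact right_mem_lineOf hzw'
    rw [mem_lineOf_iff hzw] at hm
    rcases hm with rfl | rfl | rfl
    · exact hzw'.ne rfl
    · exact hneww rfl
    · exact hpair w hw _ hw' (fun h => hneww h)
        (col_of_mem (lineOf_mem hzw) (right_mem_lineOf hzw) (third_mem hzw)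
          (third_ne_right hzw).symm)
  have himg : (fun w => S.lineOf z w) '' W = {l | l ∈ S.lines ∧ z ∈ l} := by
    apply Set.eq_of_subset_of_ncard_le
    · rintro l ⟨w, hw, rfl⟩
      exact ⟨lineOf_mem (hcol w hw), left_mem_lineOf (hcol w hw)⟩
    · rw [Set.ncard_image_of_injOn hinj, hW, hGQ.2.2.1 z]
    · exact linesThrough_finite hGQ z
  have hmem : S.lineOf z g ∈ {l | l ∈ S.lines ∧ z ∈ l} := ⟨lineOf_mem hg, left_mem_lineOf hg⟩
  rw [← himg] at hmem
  obtain ⟨w, hwW, heq⟩ := hmem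
  simp only at heq
  have hgmem : g ∈ S.lineOf z w := by rw [heq]; exact right_mem_lineOf hg
  rw [mem_lineOf_iff (hcol w hwW)] at hgmem
  rcases hgmem with rfl | rfl | rfl
  · exact absurd rfl hg.ne
  · exact ⟨g, hwW, Or.inl rfl⟩
  · exact ⟨w, hwW, Or.inr rfl⟩

lemma exists_other_line (x : P) (l0 : Finset P) (ht : 1 ≤ t) :
    ∃ l ∈ S.lines, x ∈ l ∧ l ≠ l0 := by
  by_contra h
  push_neg at h
  have hsub : {l | l ∈ S.lines ∧ x ∈ l} ⊆ {l0} := fun l hl => h l hl.1 hl.2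
  have hle := Set.ncard_le_ncard hsub (Set.finite_singleton l0)
  rw [hGQ.2.2.1 x, Set.ncard_singleton] at hle
  omega

lemma exists_fourth_line (x : P) (l1 l2 l3 : Finset P) (ht : 3 ≤ t) :
    ∃ l ∈ S.lines, x ∈ l ∧ l ≠ l1 ∧ l ≠ l2 ∧ l ≠ l3 := by
  by_contra h
  push_neg at h
  have hsub : {l | l ∈ S.lines ∧ x ∈ l} ⊆ {l1, l2, l3} := by
    intro l hl
    by_cases e1 : l = l1
    · simp [e1]
    by_cases e2 : l = l2
    · simp [e2]
    simp [h l hl.1 hl.2 e1 e2]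
  have hle := Set.ncard_le_ncard hsub (Set.toFinite _)
  have h1 := Set.ncard_insert_le l1 ({l2, l3} : Set (Finset P))
  have h2 := Set.ncard_insert_le l2 ({l3} : Set (Finset P))
  rw [Set.ncard_singleton] at h2
  rw [hGQ.2.2.1 x] at hle
  omega

lemma nbr_bound (u : P) (N : Finset P) (hcol : ∀ q ∈ N, S.Collinear u q) :
    N.card ≤ 2 * (t + 1) := by
  classical
  have hbound := Finset.card_le_mul_card_image (f := fun q => S.lineOf u q) N 2 ?_
  · refine le_trans hbound (Nat.mul_le_mul_left 2 ?_)
    have hsub : N.image (fun q => S.lineOf u q) ⊆ (linesThrough_finite hGQ u).toFinset := by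
      intro l hl
      obtain ⟨q, hq, rfl⟩ := Finset.mem_image.1 hl
      rw [Set.Finite.mem_toFinset]
      exact ⟨lineOf_mem (hcol q hq), left_mem_lineOf (hcol q hq)⟩
    have hle := Finset.card_le_card hsub
    have hcard : (linesThrough_finite hGQ u).toFinset.card = t + 1 := by
      rw [← Set.ncard_eq_toFinset_card _ (linesThrough_finite hGQ u), hGQ.2.2.1 u]
    omega
  · intro l hl
    obtain ⟨q0, hq0, rfl⟩ := Finset.mem_image.1 hl
    have hsub : {q ∈ N | S.lineOf u q = S.lineOf u q0} ⊆ (S.lineOf u q0).erase u := by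
      intro q hq
      obtain ⟨hqN, hql⟩ := Finset.mem_filter.1 hq
      refine Finset.mem_erase.2 ⟨(hcol q hqN).ne.symm, ?_⟩
      rw [← hql]
      exact right_mem_lineOf (hcol q hqN)
    refine le_trans (Finset.card_le_card hsub) ?_
    rw [Finset.card_erase_of_mem (left_mem_lineOf (hcol q0 hq0)),
      S.three_points _ (lineOf_mem (hcol q0 hq0))]

end SlimPLS

end GQCounting


section RepGeometry

namespace SlimPLS

variable {P : Type*} {S : SlimPLS P} {t : ℕ} {R : Type*} [Group R]

lemma r_cancel (ρ : S.Rep R) (x : P) (g : R) : ρ.r x * (ρ.r x * g) = g := by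
  rw [← mul_assoc, r_sq, one_mul]

lemma third_eq_of_r (ρ : S.Rep R) (hf : Function.Injective ρ.r) {a b c : P}
    (h : S.Collinear a b) (he : ρ.r a * ρ.r b = ρ.r c) : S.third a b = c :=
  hf (by rw [← r_third ρ h]; exact he)

variable (hGQ : S.IsGQ t) (ρ : S.Rep R) (hf : Function.Injective ρ.r)

include hGQ hf

/-- The null-triad lemma: if `{x,y,z}` is a 3-arc with `r x * r y * r z = 1`,
then every common neighbour of `x` and `y` is collinear with `z`. -/
lemma nullTriad {x y z : P} (hxy : ¬ S.Collinear x y) (hxz : ¬ S.Collinear x z)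
    (hyz : ¬ S.Collinear y z) (hnxy : x ≠ y) (hnxz : x ≠ z) (hnyz : y ≠ z)
    (hrel : ρ.r x * ρ.r y * ρ.r z = 1) {w : P} (hwx : S.Collinear w x)
    (hwy : S.Collinear w y) : S.Collinear w z := by
  by_contra hwz
  have h1 : (ρ.r x * ρ.r y)⁻¹ = ρ.r z := inv_eq_of_mul_eq_one_right hrel
  have h2 : ρ.r y * ρ.r x = ρ.r z := by rw [← h1, mul_inv_rev, r_inv, r_inv]
  have h3 : ρ.r x * ρ.r y = ρ.r z := by
    have h4 : ρ.r x * ρ.r y = (ρ.r z)⁻¹ := eq_inv_of_mul_eq_one_left hrel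
    rwa [r_inv] at h4
  have hxw : S.Collinear x w := hwx.symm
  have hzu : S.Collinear z (S.third x w) := by
    have hne1 : z ≠ x := hnxz.symm
    have hne2 : z ≠ w := fun h => hyz (h ▸ hwy).symm
    have hne3 : z ≠ S.third x w := fun h => hxz (h ▸ col_third_left hxw)
    rcases gq_cases hGQ hxw hne1 hne2 hne3 with h | h | h
    · exact absurd h (ncol_symm hxz)
    · exact absurd h.symm hwz
    · exact h
  set u := S.third x w with hu
  set v := S.third z u with hv
  have hru : ρ.r x * ρ.r w = ρ.r u := r_third ρ hxw
  have hrv : ρ.r v = ρ.r y * ρ.r w := by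
    have e1 : ρ.r z * ρ.r u = ρ.r v := r_third ρ hzu
    rw [← e1, ← h2, ← hru]
    simp only [mul_assoc, r_cancel ρ]
  have hyw : S.Collinear y w := hwy.symm
  have hveq : v = S.third y w := hf (by rw [hrv, r_third ρ hyw])
  have hcuv : S.Collinear u v := col_third_right hzu
  have hcwu : S.Collinear w u := col_third_right hxw
  have hcwv : S.Collinear w v := by rw [hveq]; exact col_third_right hyw
  have hwt : w = S.third u v := triangle hGQ hcuv hcwu hcwv
  have hzt : z = S.third u v :=
    third_eq_of_mem hcuv (lineOf_mem hzu) (right_mem_lineOf hzu) (third_mem hzu)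
      (left_mem_lineOf hzu) hzu.ne (third_ne_left hzu).symm
  have : w = z := hwt.trans hzt.symm
  exact hxz (this ▸ hwx).symm

/-- Case D: a 3-arc `{x,y,z}` with `r x * r y * r z = r y` is impossible. -/
lemma caseD {x y z : P} (hxy : ¬ S.Collinear x y) (hxz : ¬ S.Collinear x z)
    (hyz : ¬ S.Collinear y z) (hnxy : x ≠ y) (hnxz : x ≠ z) (hnyz : y ≠ z)
    (hrel : ρ.r x * ρ.r y * ρ.r z = ρ.r y) : False := by
  have hid : ρ.r x * ρ.r y = ρ.r y * ρ.r z := by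
    have h := congrArg (fun g => g * ρ.r z) hrel
    simpa only [mul_assoc, r_sq ρ z, mul_one] using h
  have hz : ρ.r z = ρ.r y * (ρ.r x * ρ.r y) := by
    have h := congrArg (fun g => ρ.r y * g) hid
    simp only [r_cancel ρ] at h
    exact h.symm
  -- Step 1: every common neighbour of x and y is collinear with z
  have step1 : ∀ w, S.Collinear w x → S.Collinear w y → S.Collinear w z := by
    intro w hwx hwy
    by_contra hwz
    have hyw : S.Collinear y w := hwy.symm
    set u := S.third y w with hu
    have hcyu : S.Collinear y u := col_third_left hyw
    have hcwu : S.Collinear w u := col_third_right hyw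
    have hxu : ¬ S.Collinear x u := by
      intro h
      have h3 := triangle hGQ hcwu hwx.symm h
      rw [third_other hyw] at h3
      exact hnxy h3
    have hzu : S.Collinear z u := by
      have hne1 : z ≠ y := hnyz.symm
      have hne2 : z ≠ w := fun h => hxz (h ▸ hwx).symm
      have hne3 : z ≠ u := fun h => hyz (h ▸ hcyu)
      rcases gq_cases hGQ hyw hne1 hne2 hne3 with h | h | h
      · exact absurd h (ncol_symm hyz)
      · exact absurd h (fun _ => hwz h.symm)
      · exact h
    set v := S.third z u with hv
    have hrv : ρ.r v = ρ.r u * ρ.r x := by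
      have e1 : ρ.r z * ρ.r u = ρ.r v := r_third ρ hzu
      have e2 : ρ.r y * ρ.r w = ρ.r u := r_third ρ hyw
      have hxw : ρ.r x * ρ.r w = ρ.r w * ρ.r x := r_comm ρ hwx.symm
      rw [← e1, hz, ← e2]
      simp only [mul_assoc, r_cancel ρ]
      rw [hxw]
    have hvnex : v ≠ x := by
      intro h
      rw [h] at hrv
      have h2 := congrArg (fun g => g * ρ.r x) hrv
      simp only [mul_assoc, r_sq ρ x, mul_one] at h2
      exact r_ne_one ρ u h2.symm
    have hnvx : ¬ S.Collinear v x := by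
      intro h
      have h3 : S.third v x = u := by
        apply third_eq_of_r ρ hf h
        rw [hrv, mul_assoc, r_sq ρ x, mul_one]
      have := col_third_right h
      rw [h3] at this
      exact hxu this
    have hne1 : x ≠ z := hnxz
    have hne2 : x ≠ u := fun h => hxy (h ▸ hcyu).symm
    have hne3 : x ≠ v := hvnex.symm
    rcases gq_cases hGQ hzu hne1 hne2 hne3 with h | h | h
    · exact hxz h
    · exact hxu h
    · exact hnvx h.symm
  -- pick two distinct common neighbours
  obtain ⟨hcn, hcnfin⟩ := cn_ncard_finite hGQ hxy hnxy
  have h2le : 1 < {w | S.Collinear w x ∧ S.Collinear w y}.ncard := by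
    rw [hcn]
    have := t_pos hGQ
    omega
  rw [Set.one_lt_ncard_iff hcnfin] at h2le
  obtain ⟨w₁, w₂, hw₁, hw₂, hne12⟩ := h2le
  have hpair12 : ¬ S.Collinear w₁ w₂ :=
    cn_pairwise hGQ hxy hnxy hw₁.1 hw₁.2 hw₂.1 hw₂.2 hne12
  have hzw₁ : S.Collinear w₁ z := step1 w₁ hw₁.1 hw₁.2
  have hzw₂ : S.Collinear w₂ z := step1 w₂ hw₂.1 hw₂.2
  have hyw₂ : S.Collinear y w₂ := hw₂.2.symm
  have hxw₁ : S.Collinear x w₁ := hw₁.1.symm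
  set u₂ := S.third y w₂ with hu₂
  set q₁ := S.third x w₁ with hq₁
  have hcyu₂ : S.Collinear y u₂ := col_third_left hyw₂
  have hcw₂u₂ : S.Collinear w₂ u₂ := col_third_right hyw₂
  have hcxq₁ : S.Collinear x q₁ := col_third_left hxw₁
  have hcw₁q₁ : S.Collinear w₁ q₁ := col_third_right hxw₁
  have hxu₂ : ¬ S.Collinear x u₂ := by
    intro h
    have h3 := triangle hGQ hcw₂u₂ hw₂.1.symm h
    rw [third_other hyw₂] at h3
    exact hnxy h3
  have hw₁u₂ : ¬ S.Collinear w₁ u₂ := by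
    intro h
    have h3 := triangle hGQ hcyu₂ hw₁.2 h
    rw [third_rotate hyw₂] at h3
    exact hne12 h3
  have hu₂q₁ : S.Collinear u₂ q₁ := by
    have hne1 : u₂ ≠ x := fun h => hxy (h ▸ hcyu₂).symm
    have hne2 : u₂ ≠ w₁ := fun h => hpair12 (h ▸ hcw₂u₂).symm
    have hne3 : u₂ ≠ q₁ := fun h => hxu₂ (show S.Collinear x u₂ by rw [h]; exact hcxq₁)
    rcases gq_cases hGQ hxw₁ hne1 hne2 hne3 with h | h | h
    · exact absurd h (ncol_symm hxu₂)
    · exact absurd h (ncol_symm hw₁u₂)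
    · exact h
  set g := S.third u₂ q₁ with hg
  have hzq₁ : ¬ S.Collinear z q₁ := by
    intro h
    have h3 := triangle hGQ hcw₁q₁ hzw₁.symm h
    rw [third_other hxw₁] at h3
    exact hnxz h3.symm
  have hzu₂ : ¬ S.Collinear z u₂ := by
    intro h
    have h3 := triangle hGQ hcw₂u₂ hzw₂.symm h
    rw [third_other hyw₂] at h3
    exact hnyz h3.symm
  have hzg : S.Collinear z g := by
    have hne1 : z ≠ u₂ := fun h => hyz (h ▸ hcyu₂)
    have hne2 : z ≠ q₁ := fun h => hxz (h ▸ hcxq₁)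
    have hne3 : z ≠ g := fun h => hzu₂ (show S.Collinear z u₂ by rw [h]; exact (col_third_left hu₂q₁).symm)
    rcases gq_cases hGQ hu₂q₁ hne1 hne2 hne3 with h | h | h
    · exact absurd h hzu₂
    · exact absurd h hzq₁
    · exact h
  obtain ⟨w₃, hw₃, hcase⟩ := line_meets hGQ hcnfin hcn
    (fun w hw => (step1 w hw.1 hw.2).symm)
    (fun w hw w' hw' hne => cn_pairwise hGQ hxy hnxy hw.1 hw.2 hw'.1 hw'.2 hne) hzg
  rcases hcase with heq | hgs
  · -- g = w₃
    have hgy : S.Collinear g y := by rw [heq]; exact hw₃.2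
    have hgu₂ : S.Collinear g u₂ := (col_third_left hu₂q₁).symm
    have h3 := triangle hGQ hcyu₂ hgy hgu₂
    rw [third_rotate hyw₂] at h3
    have hgq₁ : S.Collinear g q₁ := (col_third_right hu₂q₁).symm
    have h4 := triangle hGQ hcxq₁ (show S.Collinear g x by rw [h3]; exact hw₂.1) hgq₁
    rw [third_rotate hxw₁] at h4
    rw [h3] at h4
    exact hne12 h4.symm
  · -- g = third z w₃
    have hzw₃ : S.Collinear z w₃ := (step1 w₃ hw₃.1 hw₃.2).symm
    have hyw₃ : S.Collinear y w₃ := hw₃.2.symm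
    set u₃ := S.third y w₃ with hu₃
    have e1 : ρ.r u₂ * ρ.r q₁ = ρ.r g := r_third ρ hu₂q₁
    have e2 : ρ.r z * ρ.r w₃ = ρ.r g := by rw [hgs]; exact r_third ρ hzw₃
    have e3 : ρ.r y * ρ.r w₂ = ρ.r u₂ := r_third ρ hyw₂
    have e4 : ρ.r x * ρ.r w₁ = ρ.r q₁ := r_third ρ hxw₁
    have e5 : ρ.r y * ρ.r w₃ = ρ.r u₃ := r_third ρ hyw₃
    have hcomm2x : ρ.r w₂ * ρ.r x = ρ.r x * ρ.r w₂ := r_comm ρ hw₂.1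
    have key : ρ.r w₂ * ρ.r w₁ = ρ.r u₃ := by
      have h6 : ρ.r y * (ρ.r x * (ρ.r w₂ * ρ.r w₁)) =
          ρ.r y * (ρ.r x * (ρ.r y * ρ.r w₃)) := by
        calc ρ.r y * (ρ.r x * (ρ.r w₂ * ρ.r w₁))
            = (ρ.r y * ρ.r w₂) * (ρ.r x * ρ.r w₁) := by
              simp only [mul_assoc]
              rw [← mul_assoc (ρ.r x) (ρ.r w₂), ← hcomm2x, mul_assoc]
          _ = ρ.r g := by rw [e3, e4, e1]
          _ = ρ.r z * ρ.r w₃ := e2.symm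
          _ = ρ.r y * (ρ.r x * (ρ.r y * ρ.r w₃)) := by
              rw [hz, mul_assoc, mul_assoc]
      have h7 := mul_left_cancel (mul_left_cancel h6)
      rw [h7, e5]
    have hinv : ρ.r w₁ * ρ.r w₂ = ρ.r u₃ := by
      rw [← r_inv ρ u₃, ← key, mul_inv_rev, r_inv, r_inv]
    have hcyu₃ : S.Collinear y u₃ := col_third_left hyw₃
    have hcw₃u₃ : S.Collinear w₃ u₃ := col_third_right hyw₃
    have hnu₃w₁ : ¬ S.Collinear u₃ w₁ := by
      intro h
      have h3 : S.third u₃ w₁ = w₂ := by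
        apply third_eq_of_r ρ hf h
        rw [← key, mul_assoc, r_sq ρ w₁, mul_one]
      have := col_third_right h
      rw [h3] at this
      exact hpair12 this
    have hnu₃w₂ : ¬ S.Collinear u₃ w₂ := by
      intro h
      have h3 : S.third u₃ w₂ = w₁ := by
        apply third_eq_of_r ρ hf h
        rw [← hinv, mul_assoc, r_sq ρ w₂, mul_one]
      have := col_third_right h
      rw [h3] at this
      exact hpair12 this.symm
    have hneu₃w₁ : u₃ ≠ w₁ := by
      intro h
      rw [h] at key
      have h2 := mul_right_cancel (key.trans (one_mul (ρ.r w₁)).symm)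
      exact r_ne_one ρ w₂ h2
    have hneu₃w₂ : u₃ ≠ w₂ := by
      intro h
      rw [h] at hinv
      have h2 := mul_right_cancel (hinv.trans (one_mul (ρ.r w₂)).symm)
      exact r_ne_one ρ w₁ h2
    have hxu₃ : ¬ S.Collinear x u₃ := by
      intro h
      have h3 := triangle hGQ hcw₃u₃ hw₃.1.symm h
      rw [third_other hyw₃] at h3
      exact hnxy h3
    have hrel2 : ρ.r w₁ * ρ.r w₂ * ρ.r u₃ = 1 := by
      rw [hinv, r_sq]
    exact hxu₃ (nullTriad hGQ ρ hf hpair12 (ncol_symm hnu₃w₁) (ncol_symm hnu₃w₂)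
      hne12 hneu₃w₁.symm hneu₃w₂.symm hrel2 hw₁.1.symm hw₂.1.symm)

end SlimPLS

end RepGeometry


section RepGeometry2

namespace SlimPLS

variable {P : Type*} {S : SlimPLS P} {t : ℕ} {R : Type*} [Group R]
variable (hGQ : S.IsGQ t) (ρ : S.Rep R) (hf : Function.Injective ρ.r)

include hGQ hf

/-- If the product point of a 3-arc is collinear with the first point of the
arc, it is collinear with the other two as well. -/
lemma lemX {a b c d : P} (hab : ¬ S.Collinear a b) (hac : ¬ S.Collinear a c)
    (hbc : ¬ S.Collinear b c) (hnab : a ≠ b) (hnac : a ≠ c) (hnbc : b ≠ c)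
    (hrel : ρ.r a * ρ.r b * ρ.r c = ρ.r d) (hda : S.Collinear d a) :
    S.Collinear d b ∧ S.Collinear d c := by
  have had : S.Collinear a d := hda.symm
  set e := S.third a d with he
  have hre : ρ.r e = ρ.r b * ρ.r c := by
    rw [← r_third ρ had, ← hrel]
    simp only [mul_assoc, r_cancel ρ]
  have hcomm_bc : ρ.r b * ρ.r c = ρ.r c * ρ.r b := by
    have h1 := r_sq ρ e
    rw [hre] at h1
    have h2 : ρ.r b * ρ.r c = (ρ.r b * ρ.r c)⁻¹ := eq_inv_of_mul_eq_one_left h1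
    rwa [mul_inv_rev, r_inv, r_inv] at h2
  have hneb : e ≠ b := by
    intro h
    rw [h] at hre
    have h2 : ρ.r b * 1 = ρ.r b * ρ.r c := by rw [mul_one]; exact hre
    exact r_ne_one ρ c (mul_left_cancel h2).symm
  have hnec : e ≠ c := by
    intro h
    rw [h] at hre
    have h2 : 1 * ρ.r c = ρ.r b * ρ.r c := by rw [one_mul]; exact hre
    exact r_ne_one ρ b (mul_right_cancel h2).symm
  have hneb' : ¬ S.Collinear e b := by
    intro h
    have h3 : S.third e b = c := by
      apply third_eq_of_r ρ hf h
      rw [hre, hcomm_bc, mul_assoc, r_sq ρ b, mul_one]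
    have := col_third_right h
    rw [h3] at this
    exact hbc this
  have hnec' : ¬ S.Collinear e c := by
    intro h
    have h3 : S.third e c = b := by
      apply third_eq_of_r ρ hf h
      rw [hre, mul_assoc, r_sq ρ c, mul_one]
    have := col_third_right h
    rw [h3] at this
    exact hbc this.symm
  have hcb : S.Collinear d b := by
    have hne1 : b ≠ a := hnab.symm
    have hne2 : b ≠ d := fun h => hab (h ▸ hda).symm
    have hne3 : b ≠ e := hneb.symm
    rcases gq_cases hGQ had hne1 hne2 hne3 with h | h | h
    · exact absurd h (ncol_symm hab)
    · exact h.symm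
    · exact absurd h (ncol_symm hneb')
  have hcc : S.Collinear d c := by
    have hne1 : c ≠ a := hnac.symm
    have hne2 : c ≠ d := fun h => hac (h ▸ hda).symm
    have hne3 : c ≠ e := hnec.symm
    rcases gq_cases hGQ had hne1 hne2 hne3 with h | h | h
    · exact absurd h (ncol_symm hac)
    · exact h.symm
    · exact absurd h (ncol_symm hnec')
  exact ⟨hcb, hcc⟩

/-- Branch 2 of the 4-arc case. -/
lemma br2 {a b c d w : P} (hab : ¬ S.Collinear a b) (hbc : ¬ S.Collinear b c)
    (hnab : a ≠ b) (hnbc : b ≠ c)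
    (hrel : ρ.r a * ρ.r b * ρ.r c = ρ.r d)
    (hda : ¬ S.Collinear d a) (hdb : ¬ S.Collinear d b) (hdc : ¬ S.Collinear d c)
    (hnda : d ≠ a) (hndb : d ≠ b)
    (hwa : S.Collinear w a) (hwb : S.Collinear w b)
    (hcw : S.Collinear c w) (hdw : ¬ S.Collinear d w) : False := by
  have hdinv : ρ.r d = ρ.r c * (ρ.r b * ρ.r a) := by
    rw [← r_inv ρ d, ← hrel]
    simp only [mul_inv_rev, r_inv, mul_assoc]
  have hda_eq : ρ.r d * ρ.r a = ρ.r c * ρ.r b := by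
    rw [hdinv]
    simp only [mul_assoc, r_sq ρ a, mul_one]
  have haw : S.Collinear a w := hwa.symm
  set u := S.third a w with hu
  have hdu : S.Collinear d u := by
    have hne1 : d ≠ a := hnda
    have hne2 : d ≠ w := fun h => hdc (show S.Collinear d c by rw [h]; exact hcw.symm)
    have hne3 : d ≠ u := fun h => hdw (show S.Collinear d w by rw [h]; exact (col_third_right haw).symm)
    rcases gq_cases hGQ haw hne1 hne2 hne3 with h | h | h
    · exact absurd h hda
    · exact absurd h hdw
    · exact h
  set m := S.third d u with hm
  have hnbu : ¬ S.Collinear b u := by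
    intro h
    have h3 := triangle hGQ (col_third_right haw) hwb.symm h
    rw [third_other haw] at h3
    exact hnab h3.symm
  have hbm : S.Collinear b m := by
    have hne1 : b ≠ d := hndb.symm
    have hne2 : b ≠ u := fun h => hab (show S.Collinear a b by rw [h]; exact col_third_left haw)
    have hne3 : b ≠ m := fun h => hdb (show S.Collinear d b by rw [h]; exact col_third_left hdu)
    rcases gq_cases hGQ hdu hne1 hne2 hne3 with h | h | h
    · exact absurd h (ncol_symm hdb)
    · exact absurd h hnbu
    · exact h
  set n := S.third b m with hn
  have hrn : ρ.r n = ρ.r c * ρ.r w := by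
    have e1' := r_third ρ hbm.symm
    rw [← third_comm hbm] at e1'
    have e2 : ρ.r d * ρ.r u = ρ.r m := r_third ρ hdu
    have e3 : ρ.r a * ρ.r w = ρ.r u := r_third ρ haw
    have hbw : ρ.r b * ρ.r w = ρ.r w * ρ.r b := r_comm ρ hwb.symm
    calc ρ.r n = ρ.r m * ρ.r b := e1'.symm
      _ = (ρ.r d * (ρ.r a * ρ.r w)) * ρ.r b := by rw [e3, e2]
      _ = ρ.r d * ρ.r a * (ρ.r b * ρ.r w) := by
          simp only [mul_assoc]
          rw [hbw]
      _ = (ρ.r c * ρ.r b) * (ρ.r b * ρ.r w) := by rw [hda_eq]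
      _ = ρ.r c * ρ.r w := by simp only [mul_assoc, r_cancel ρ]
  set x := S.third c w with hx
  have hxn : x = n := hf (show ρ.r x = ρ.r n by rw [← r_third ρ hcw, hrn])
  have hbn : S.Collinear b n := col_third_left hbm
  have hnbx : ¬ S.Collinear b x := by
    intro h
    have h3 := triangle hGQ (col_third_right hcw) hwb.symm h
    rw [third_other hcw] at h3
    exact hnbc h3
  exact hnbx (by rw [hxn]; exact hbn)

end SlimPLS

end RepGeometry2


section RepGeometry3

namespace SlimPLS

variable {P : Type*} {S : SlimPLS P} {t : ℕ} {R : Type*} [Group R]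
variable (hGQ : S.IsGQ t) (ρ : S.Rep R) (hf : Function.Injective ρ.r)

include hGQ hf

/-- Branch 4 of the 4-arc case. -/
lemma br4 {a b c d w : P} (hab : ¬ S.Collinear a b) (hac : ¬ S.Collinear a c)
    (hbc : ¬ S.Collinear b c) (hnab : a ≠ b) (hnac : a ≠ c) (hnbc : b ≠ c)
    (hrel : ρ.r a * ρ.r b * ρ.r c = ρ.r d)
    (hda : ¬ S.Collinear d a) (hdb : ¬ S.Collinear d b) (hdc : ¬ S.Collinear d c)
    (hnda : d ≠ a) (hndb : d ≠ b) (hndc : d ≠ c)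
    (hwa : S.Collinear w a) (hwb : S.Collinear w b)
    (hcw : ¬ S.Collinear c w) (hdw : ¬ S.Collinear d w) : False := by
  have hdinv : ρ.r d = ρ.r c * (ρ.r b * ρ.r a) := by
    rw [← r_inv ρ d, ← hrel]
    simp only [mul_inv_rev, r_inv, mul_assoc]
  have hda_eq : ρ.r d * ρ.r a = ρ.r c * ρ.r b := by
    rw [hdinv]
    simp only [mul_assoc, r_sq ρ a, mul_one]
  have h_ad : ρ.r a * ρ.r d = ρ.r b * ρ.r c := by
    rw [← hrel]
    simp only [mul_assoc, r_cancel ρ]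
  have haw : S.Collinear a w := hwa.symm
  have hbw' : S.Collinear b w := hwb.symm
  have hcomm_aw : ρ.r a * ρ.r w = ρ.r w * ρ.r a := r_comm ρ haw
  set u := S.third a w with hu
  set u' := S.third b w with hu'
  have hnecw : c ≠ w := fun h => hac (show S.Collinear a c by rw [h]; exact haw)
  have hcu : S.Collinear c u := by
    have hne1 : c ≠ a := hnac.symm
    have hne3 : c ≠ u := fun h => hcw (show S.Collinear c w by rw [h]; exact (col_third_right haw).symm)
    rcases gq_cases hGQ haw hne1 hnecw hne3 with h | h | h
    · exact absurd h (ncol_symm hac)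
    · exact absurd h hcw
    · exact h
  have hnedw : d ≠ w := fun h => hda (show S.Collinear d a by rw [h]; exact hwa)
  have hdu : S.Collinear d u := by
    have hne3 : d ≠ u := fun h => hdw (show S.Collinear d w by rw [h]; exact (col_third_right haw).symm)
    rcases gq_cases hGQ haw hnda hnedw hne3 with h | h | h
    · exact absurd h hda
    · exact absurd h hdw
    · exact h
  have hdu' : S.Collinear d u' := by
    have hne3 : d ≠ u' := fun h => hdw (show S.Collinear d w by rw [h]; exact (col_third_right hbw').symm)
    rcases gq_cases hGQ hbw' hndb hnedw hne3 with h | h | h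
    · exact absurd h hdb
    · exact absurd h hdw
    · exact h
  set m := S.third d u with hm
  have hnbu : ¬ S.Collinear b u := by
    intro h
    have h3 := triangle hGQ (col_third_right haw) hwb.symm h
    rw [third_other haw] at h3
    exact hnab h3.symm
  have hbm : S.Collinear b m := by
    have hne1 : b ≠ d := hndb.symm
    have hne2 : b ≠ u := fun h => hab (show S.Collinear a b by rw [h]; exact col_third_left haw)
    have hne3 : b ≠ m := fun h => hdb (show S.Collinear d b by rw [h]; exact col_third_left hdu)
    rcases gq_cases hGQ hdu hne1 hne2 hne3 with h | h | h
    · exact absurd h (ncol_symm hdb)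
    · exact absurd h hnbu
    · exact h
  set n := S.third b m with hn
  have hrn : ρ.r n = ρ.r c * ρ.r w := by
    have e1' := r_third ρ hbm.symm
    rw [← third_comm hbm] at e1'
    have e2 : ρ.r d * ρ.r u = ρ.r m := r_third ρ hdu
    have e3 : ρ.r a * ρ.r w = ρ.r u := r_third ρ haw
    have hbw2 : ρ.r b * ρ.r w = ρ.r w * ρ.r b := r_comm ρ hbw'
    calc ρ.r n = ρ.r m * ρ.r b := e1'.symm
      _ = (ρ.r d * (ρ.r a * ρ.r w)) * ρ.r b := by rw [e3, e2]
      _ = ρ.r d * ρ.r a * (ρ.r b * ρ.r w) := by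
          simp only [mul_assoc]
          rw [hbw2]
      _ = (ρ.r c * ρ.r b) * (ρ.r b * ρ.r w) := by rw [hda_eq]
      _ = ρ.r c * ρ.r w := by simp only [mul_assoc, r_cancel ρ]
  have hsqn := r_sq ρ n
  rw [hrn] at hsqn
  have hcomm_cw : ρ.r c * ρ.r w = ρ.r w * ρ.r c := by
    have h2 : ρ.r c * ρ.r w = (ρ.r c * ρ.r w)⁻¹ := eq_inv_of_mul_eq_one_left hsqn
    rwa [mul_inv_rev, r_inv, r_inv] at h2
  have hnnc : ¬ S.Collinear n c := by
    intro h
    have h3 : S.third n c = w := by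
      apply third_eq_of_r ρ hf h
      rw [hrn, mul_assoc, ← hcomm_cw, r_cancel ρ]
    have := col_third_right h
    rw [h3] at this
    exact hcw this
  have hnnw : ¬ S.Collinear n w := by
    intro h
    have h3 : S.third n w = c := by
      apply third_eq_of_r ρ hf h
      rw [hrn, mul_assoc, r_sq ρ w, mul_one]
    have := col_third_right h
    rw [h3] at this
    exact hcw this.symm
  have hnenc : n ≠ c := by
    intro h
    rw [h] at hrn
    have h2 : ρ.r c * 1 = ρ.r c * ρ.r w := by rw [mul_one]; exact hrn
    exact r_ne_one ρ w (mul_left_cancel h2).symm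
  have hnenw : n ≠ w := by
    intro h
    rw [h] at hrn
    have h2 : 1 * ρ.r w = ρ.r c * ρ.r w := by rw [one_mul]; exact hrn
    exact r_ne_one ρ c (mul_right_cancel h2).symm
  have hrelcwn : ρ.r c * ρ.r w * ρ.r n = 1 := by
    rw [hrn]; exact hsqn
  have hun : S.Collinear u n :=
    nullTriad hGQ ρ hf hcw (ncol_symm hnnc) (ncol_symm hnnw) hnecw hnenc.symm hnenw.symm
      hrelcwn hcu.symm (col_third_right haw).symm
  set q := S.third u n with hq
  have hrq : ρ.r q = ρ.r a * ρ.r c := by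
    rw [← r_third ρ hun, ← r_third ρ haw, hrn]
    simp only [mul_assoc]
    rw [← mul_assoc (ρ.r w) (ρ.r c), ← hcomm_cw, mul_assoc, r_sq ρ w, mul_one]
  have hsqq := r_sq ρ q
  rw [hrq] at hsqq
  have hcomm_ac : ρ.r a * ρ.r c = ρ.r c * ρ.r a := by
    have h2 : ρ.r a * ρ.r c = (ρ.r a * ρ.r c)⁻¹ := eq_inv_of_mul_eq_one_left hsqq
    rwa [mul_inv_rev, r_inv, r_inv] at h2
  have hnqa : ¬ S.Collinear q a := by
    intro h
    have h3 : S.third q a = c := by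
      apply third_eq_of_r ρ hf h
      rw [hrq, hcomm_ac, mul_assoc, r_sq ρ a, mul_one]
    have := col_third_right h
    rw [h3] at this
    exact hac this
  have hnqc : ¬ S.Collinear q c := by
    intro h
    have h3 : S.third q c = a := by
      apply third_eq_of_r ρ hf h
      rw [hrq, mul_assoc, r_sq ρ c, mul_one]
    have := col_third_right h
    rw [h3] at this
    exact hac this.symm
  have hneqa : q ≠ a := by
    intro h
    rw [h] at hrq
    have h2 : ρ.r a * 1 = ρ.r a * ρ.r c := by rw [mul_one]; exact hrq
    exact r_ne_one ρ c (mul_left_cancel h2).symm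
  have hneqc : q ≠ c := by
    intro h
    rw [h] at hrq
    have h2 : 1 * ρ.r c = ρ.r a * ρ.r c := by rw [one_mul]; exact hrq
    exact r_ne_one ρ a (mul_right_cancel h2).symm
  have hrelacq : ρ.r a * ρ.r c * ρ.r q = 1 := by
    rw [hrq]; exact hsqq
  -- common neighbours of a and c are collinear with q
  obtain ⟨hcn, hcnfin⟩ := cn_ncard_finite hGQ hac hnac
  have hγq : ∀ γ ∈ {v | S.Collinear v a ∧ S.Collinear v c}, S.Collinear q γ := by
    intro γ hγ
    exact (nullTriad hGQ ρ hf hac (ncol_symm hnqa) (ncol_symm hnqc) hnac hneqa.symm hneqc.symm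
      hrelacq hγ.1 hγ.2).symm
  have hnuu' : ¬ S.Collinear u u' := by
    intro h
    have h3 := triangle hGQ (col_third_right hbw') (col_third_right haw).symm h
    rw [third_other hbw'] at h3
    have : S.Collinear a b := by rw [← h3]; exact col_third_left haw
    exact hab this
  have hnu'n : ¬ S.Collinear u' n := by
    intro h
    have h3 := triangle hGQ (col_third_left hbw') (col_third_left hbm).symm h.symm
    rw [third_rotate hbw'] at h3
    exact hnenw h3
  have hqu' : S.Collinear u' q := by
    have hne1 : u' ≠ u := fun h => hnbu (show S.Collinear b u by rw [← h]; exact col_third_left hbw')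
    have hne2 : u' ≠ n := fun h => hnbc (hf (mul_right_cancel
      (show ρ.r b * ρ.r w = ρ.r c * ρ.r w by rw [r_third ρ hbw', ← hu', h, hrn])))
    have hne3 : u' ≠ q := fun h => hnuu' (show S.Collinear u u' by rw [h]; exact col_third_left hun)
    rcases gq_cases hGQ hun hne1 hne2 hne3 with h | h | h
    · exact absurd h (ncol_symm hnuu')
    · exact absurd h hnu'n
    · exact h
  have hnu'a : ¬ S.Collinear u' a := by
    intro h
    have h3 := triangle hGQ (col_third_right hbw') haw h.symm
    rw [third_other hbw'] at h3
    exact hnab h3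
  obtain ⟨γ, hγ, hcase⟩ := line_meets hGQ hcnfin hcn hγq
    (fun v hv v' hv' hne => cn_pairwise hGQ hac hnac hv.1 hv.2 hv'.1 hv'.2 hne) hqu'.symm
  rcases hcase with heq | hcase
  · exact hnu'a (by rw [heq]; exact hγ.1)
  -- u' = third q γ
  have hqγ : S.Collinear q γ := hγq γ hγ
  have e : ρ.r q * ρ.r γ = ρ.r u' := by rw [r_third ρ hqγ, ← hcase]
  have hrγ : ρ.r γ = ρ.r q * ρ.r u' := by rw [← e, r_cancel ρ]
  have hrγ2 : ρ.r γ = ρ.r a * ρ.r c * (ρ.r b * ρ.r w) := by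
    rw [hrγ, hrq, ← r_third ρ hbw']
  -- commutation with a gives [a,b] = 1
  have push_ac : ∀ Z : R, ρ.r a * (ρ.r c * Z) = ρ.r c * (ρ.r a * Z) := by
    intro Z
    rw [← mul_assoc, hcomm_ac, mul_assoc]
  have hcomm_ab : ρ.r a * ρ.r b = ρ.r b * ρ.r a := by
    have h0 : ρ.r γ * ρ.r a = ρ.r a * ρ.r γ := r_comm ρ hγ.1
    rw [hrγ2] at h0
    simp only [mul_assoc] at h0
    rw [← hcomm_aw] at h0
    rw [push_ac, r_cancel ρ] at h0
    have h2 := mul_left_cancel h0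
    have h3 := congrArg (fun g => g * ρ.r w) h2
    simp only [mul_assoc, r_sq ρ w, mul_one] at h3
    have h4 := congrArg (fun g => g * ρ.r a) h3
    simpa only [mul_assoc, r_sq ρ a, mul_one] using h4
  -- commutation with c gives [b,c] = 1
  have hcomm_bc : ρ.r b * ρ.r c = ρ.r c * ρ.r b := by
    have h0 : ρ.r γ * ρ.r c = ρ.r c * ρ.r γ := r_comm ρ hγ.2
    rw [hrγ2] at h0
    simp only [mul_assoc] at h0
    rw [← hcomm_cw] at h0
    rw [push_ac] at h0
    have h2 := mul_left_cancel (mul_left_cancel h0)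
    have h3 := congrArg (fun g => g * ρ.r w) h2
    simpa only [mul_assoc, r_sq ρ w, mul_one] using h3
  -- final contradiction
  set m' := S.third d u' with hm'
  have ham' : S.Collinear a m' := by
    have hne1 : a ≠ d := hnda.symm
    have hne2 : a ≠ u' := fun h => (ncol_symm hab) (show S.Collinear b a by rw [h]; exact col_third_left hbw')
    have hne3 : a ≠ m' := fun h => hda (show S.Collinear d a by rw [h]; exact col_third_left hdu')
    rcases gq_cases hGQ hdu' hne1 hne2 hne3 with h | h | h
    · exact absurd h.symm hda
    · exact absurd h.symm hnu'a
    · exact h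
  set n'' := S.third a m' with hn''
  have hrn'' : ρ.r n'' = ρ.r c * ρ.r w := by
    have e1 : ρ.r a * ρ.r m' = ρ.r n'' := r_third ρ ham'
    have e2 : ρ.r d * ρ.r u' = ρ.r m' := r_third ρ hdu'
    have e3 : ρ.r b * ρ.r w = ρ.r u' := r_third ρ hbw'
    calc ρ.r n'' = ρ.r a * (ρ.r d * (ρ.r b * ρ.r w)) := by rw [e3, e2, e1]
      _ = (ρ.r b * ρ.r c) * (ρ.r b * ρ.r w) := by rw [← mul_assoc, h_ad]
      _ = (ρ.r c * ρ.r b) * (ρ.r b * ρ.r w) := by rw [hcomm_bc]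
      _ = ρ.r c * ρ.r w := by simp only [mul_assoc, r_cancel ρ]
  have hn''n : n'' = n := hf (by rw [hrn'', hrn])
  have hna : ¬ S.Collinear a n := by
    intro h
    have h3 := triangle hGQ hun (col_third_left haw) h
    rw [← hq] at h3
    exact hneqa h3.symm
  exact hna (by rw [← hn''n]; exact col_third_left ham')

end SlimPLS

end RepGeometry3


section RepGeometry4

namespace SlimPLS

variable {P : Type*} {S : SlimPLS P}

lemma third_inj {x v v' : P} (hxv : S.Collinear x v) (hxv' : S.Collinear x v')
    (hncol : v ≠ v' → ¬ S.Collinear v v') (h : S.third x v = S.third x v') : v = v' := by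
  by_contra hne
  have hn := hncol hne
  have hl : S.lineOf x v = S.lineOf x v' :=
    S.unique_line _ (lineOf_mem hxv) _ (lineOf_mem hxv') x (S.third x v)
      (third_ne_left hxv).symm (left_mem_lineOf hxv) (third_mem hxv)
      (left_mem_lineOf hxv') (by rw [h]; exact third_mem hxv')
  have hv' : v' ∈ S.lineOf x v := hl ▸ right_mem_lineOf hxv'
  rw [mem_lineOf_iff hxv] at hv'
  rcases hv' with rfl | rfl | rfl
  · exact hxv'.ne rfl
  · exact hne rfl
  · exact hn (col_third_right hxv)

variable {t : ℕ} {R : Type*} [Group R]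
variable (hGQ : S.IsGQ t) (ρ : S.Rep R) (hf : Function.Injective ρ.r)

include hGQ hf

/-- The 4-arc case is impossible. -/
lemma fourArc {a b c d : P} (hab : ¬ S.Collinear a b) (hac : ¬ S.Collinear a c)
    (hbc : ¬ S.Collinear b c) (hnab : a ≠ b) (hnac : a ≠ c) (hnbc : b ≠ c)
    (hrel : ρ.r a * ρ.r b * ρ.r c = ρ.r d)
    (hda : ¬ S.Collinear d a) (hdb : ¬ S.Collinear d b) (hdc : ¬ S.Collinear d c)
    (hnda : d ≠ a) (hndb : d ≠ b) (hndc : d ≠ c) : False := by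
  classical
  have hrel' : ρ.r b * ρ.r a * ρ.r d = ρ.r c := by
    rw [← hrel]
    simp only [mul_assoc, r_cancel ρ]
  -- every common neighbour of a and b is collinear with c and d
  have hall : ∀ w, S.Collinear w a → S.Collinear w b →
      S.Collinear c w ∧ S.Collinear d w := by
    intro w hwa hwb
    by_cases hcw : S.Collinear c w
    · by_cases hdw : S.Collinear d w
      · exact ⟨hcw, hdw⟩
      · exact absurd (br2 hGQ ρ hf hab hbc hnab hnbc hrel hda hdb hdc hnda hndb
          hwa hwb hcw hdw) id
    · by_cases hdw : S.Collinear d w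
      · exact absurd (br2 hGQ ρ hf (ncol_symm hab) (ncol_symm hda) hnab.symm hnda.symm
          hrel' (ncol_symm hbc) (ncol_symm hac) (fun h => hdc h.symm) hnbc.symm hnac.symm
          hwb hwa hdw hcw) id
      · exact absurd (br4 hGQ ρ hf hab hac hbc hnab hnac hnbc hrel hda hdb hdc
          hnda hndb hndc hwa hwb hcw hdw) id
  -- Branch 1: counting contradiction
  obtain ⟨hcn, hcnfin⟩ := cn_ncard_finite hGQ hab hnab
  obtain ⟨w₁, hw₁a, hw₁b⟩ := exists_cn hGQ hab hnab
  have hcd₁ := hall w₁ hw₁a hw₁b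
  have haw₁ : S.Collinear a w₁ := hw₁a.symm
  set u₁ := S.third a w₁ with hu₁
  have hcu₁a : S.Collinear u₁ a := (col_third_left haw₁).symm
  have hcu₁w : S.Collinear u₁ w₁ := (col_third_right haw₁).symm
  have hnu₁b : ¬ S.Collinear b u₁ := by
    intro h
    have h3 := triangle hGQ (col_third_right haw₁) hw₁b.symm h
    rw [third_other haw₁] at h3
    exact hnab h3.symm
  have hnu₁c : ¬ S.Collinear c u₁ := by
    intro h
    have h3 := triangle hGQ (col_third_right haw₁) hcd₁.1 h
    rw [third_other haw₁] at h3
    exact hnac h3.symm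
  have hnu₁d : ¬ S.Collinear d u₁ := by
    intro h
    have h3 := triangle hGQ (col_third_right haw₁) hcd₁.2 h
    rw [third_other haw₁] at h3
    exact hnda h3
  have key : ∀ v, S.Collinear v a → S.Collinear v b → v ≠ w₁ →
      S.Collinear u₁ (S.third b v) ∧ S.Collinear u₁ (S.third c v) ∧
        S.Collinear u₁ (S.third d v) := by
    intro v hva hvb hvne
    have hbv : S.Collinear b v := hvb.symm
    have hcv : S.Collinear c v := (hall v hva hvb).1
    have hdv : S.Collinear d v := (hall v hva hvb).2
    have hnw₁v : ¬ S.Collinear w₁ v :=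
      cn_pairwise hGQ hab hnab hw₁a hw₁b hva hvb (fun h => hvne h.symm)
    have hnu₁v : ¬ S.Collinear u₁ v := by
      intro h
      have h3 := triangle hGQ (col_third_left haw₁) hva h.symm
      rw [third_rotate haw₁] at h3
      exact hvne h3
    have hne2 : u₁ ≠ v := fun h => hnw₁v (show S.Collinear w₁ v by rw [← h]; exact hcu₁w.symm)
    refine ⟨?_, ?_, ?_⟩
    · have hne1 : u₁ ≠ b := fun h => hab (show S.Collinear a b by rw [← h]; exact hcu₁a.symm)
      have hne3 : u₁ ≠ S.third b v :=
        fun h => hnu₁b (show S.Collinear b u₁ by rw [h]; exact col_third_left hbv)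
      rcases gq_cases hGQ hbv hne1 hne2 hne3 with h | h | h
      · exact absurd h (ncol_symm hnu₁b)
      · exact absurd h hnu₁v
      · exact h
    · have hne1 : u₁ ≠ c := fun h => hac (show S.Collinear a c by rw [← h]; exact hcu₁a.symm)
      have hne3 : u₁ ≠ S.third c v :=
        fun h => hnu₁c (show S.Collinear c u₁ by rw [h]; exact col_third_left hcv)
      rcases gq_cases hGQ hcv hne1 hne2 hne3 with h | h | h
      · exact absurd h (ncol_symm hnu₁c)
      · exact absurd h hnu₁v
      · exact h
    · have hne1 : u₁ ≠ d := fun h => hda (show S.Collinear d a by rw [← h]; exact hcu₁a)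
      have hne3 : u₁ ≠ S.third d v :=
        fun h => hnu₁d (show S.Collinear d u₁ by rw [h]; exact col_third_left hdv)
      rcases gq_cases hGQ hdv hne1 hne2 hne3 with h | h | h
      · exact absurd h (ncol_symm hnu₁d)
      · exact absurd h hnu₁v
      · exact h
  set Wr := hcnfin.toFinset.erase w₁ with hWr
  have hWrmem : ∀ v ∈ Wr, (S.Collinear v a ∧ S.Collinear v b) ∧ v ≠ w₁ := by
    intro v hv
    obtain ⟨hvne, hvW⟩ := Finset.mem_erase.1 hv
    rw [Set.Finite.mem_toFinset] at hvW
    exact ⟨hvW, hvne⟩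
  have hWrcard : Wr.card = t := by
    rw [Finset.card_erase_of_mem (by rw [Set.Finite.mem_toFinset]; exact ⟨hw₁a, hw₁b⟩),
      ← Set.ncard_eq_toFinset_card _ hcnfin, hcn]
    omega
  set Nb := Wr.image (fun v => S.third b v) with hNb
  set Nc := Wr.image (fun v => S.third c v) with hNc
  set Nd := Wr.image (fun v => S.third d v) with hNd
  have hpairWr : ∀ v ∈ Wr, ∀ v' ∈ Wr, v ≠ v' → ¬ S.Collinear v v' := by
    intro v hv v' hv' hne
    exact cn_pairwise hGQ hab hnab (hWrmem v hv).1.1 (hWrmem v hv).1.2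
      (hWrmem v' hv').1.1 (hWrmem v' hv').1.2 hne
  have hcardNb : Nb.card = t := by
    rw [hNb, Finset.card_image_of_injOn, hWrcard]
    intro v hv v' hv' h
    exact third_inj ((hWrmem v hv).1.2.symm) ((hWrmem v' hv').1.2.symm)
      (fun hne => hpairWr v hv v' hv' hne) h
  have hcardNc : Nc.card = t := by
    rw [hNc, Finset.card_image_of_injOn, hWrcard]
    intro v hv v' hv' h
    exact third_inj ((hall v (hWrmem v hv).1.1 (hWrmem v hv).1.2).1)
      ((hall v' (hWrmem v' hv').1.1 (hWrmem v' hv').1.2).1)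
      (fun hne => hpairWr v hv v' hv' hne) h
  have hcardNd : Nd.card = t := by
    rw [hNd, Finset.card_image_of_injOn, hWrcard]
    intro v hv v' hv' h
    exact third_inj ((hall v (hWrmem v hv).1.1 (hWrmem v hv).1.2).2)
      ((hall v' (hWrmem v' hv').1.1 (hWrmem v' hv').1.2).2)
      (fun hne => hpairWr v hv v' hv' hne) h
  -- membership properties
  have hmemNb : ∀ x ∈ Nb, S.Collinear b x ∧ S.Collinear u₁ x := by
    intro x hx
    obtain ⟨v, hv, rfl⟩ := Finset.mem_image.1 hx
    exact ⟨col_third_left (hWrmem v hv).1.2.symm,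
      (key v (hWrmem v hv).1.1 (hWrmem v hv).1.2 (hWrmem v hv).2).1⟩
  have hmemNc : ∀ x ∈ Nc, S.Collinear c x ∧ ¬ S.Collinear b x ∧ S.Collinear u₁ x := by
    intro x hx
    obtain ⟨v, hv, rfl⟩ := Finset.mem_image.1 hx
    have hcv : S.Collinear c v := (hall v (hWrmem v hv).1.1 (hWrmem v hv).1.2).1
    refine ⟨col_third_left hcv, ?_, (key v (hWrmem v hv).1.1 (hWrmem v hv).1.2 (hWrmem v hv).2).2.1⟩
    intro h
    have h3 := triangle hGQ (col_third_right hcv) (hWrmem v hv).1.2.symm h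
    rw [third_other hcv] at h3
    exact hnbc h3
  have hmemNd : ∀ x ∈ Nd, S.Collinear d x ∧ ¬ S.Collinear b x ∧ ¬ S.Collinear c x ∧
      S.Collinear u₁ x := by
    intro x hx
    obtain ⟨v, hv, rfl⟩ := Finset.mem_image.1 hx
    have hdv : S.Collinear d v := (hall v (hWrmem v hv).1.1 (hWrmem v hv).1.2).2
    have hcv : S.Collinear c v := (hall v (hWrmem v hv).1.1 (hWrmem v hv).1.2).1
    refine ⟨col_third_left hdv, ?_, ?_,
      (key v (hWrmem v hv).1.1 (hWrmem v hv).1.2 (hWrmem v hv).2).2.2⟩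
    · intro h
      have h3 := triangle hGQ (col_third_right hdv) (hWrmem v hv).1.2.symm h
      rw [third_other hdv] at h3
      exact hndb h3.symm
    · intro h
      have h3 := triangle hGQ (col_third_right hdv) hcv h
      rw [third_other hdv] at h3
      exact hndc h3.symm
  -- disjointness
  have hdisj1 : Disjoint Nb Nc := by
    rw [Finset.disjoint_left]
    intro x hx hx'
    exact (hmemNc x hx').2.1 (hmemNb x hx).1
  have hdisj2 : Disjoint (Nb ∪ Nc) Nd := by
    rw [Finset.disjoint_left]
    intro x hx hx'
    rcases Finset.mem_union.1 hx with h | h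
    · exact (hmemNd x hx').2.1 (hmemNb x h).1
    · exact (hmemNd x hx').2.2.1 (hmemNc x h).1
  have hU : (Nb ∪ Nc ∪ Nd).card = 3 * t := by
    rw [Finset.card_union_of_disjoint hdisj2, Finset.card_union_of_disjoint hdisj1,
      hcardNb, hcardNc, hcardNd]
    ring
  have hw₁U : w₁ ∉ Nb ∪ Nc ∪ Nd := by
    intro h
    have hcolw : S.Collinear u₁ w₁ := hcu₁w
    rcases Finset.mem_union.1 h with h' | h'
    · rcases Finset.mem_union.1 h' with h'' | h''
      · obtain ⟨v, hv, heq⟩ := Finset.mem_image.1 h''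
        have := col_third_right (hWrmem v hv).1.2.symm
        rw [heq] at this
        exact cn_pairwise hGQ hab hnab (hWrmem v hv).1.1 (hWrmem v hv).1.2 hw₁a hw₁b
          (hWrmem v hv).2 this
      · obtain ⟨v, hv, heq⟩ := Finset.mem_image.1 h''
        have := col_third_right ((hall v (hWrmem v hv).1.1 (hWrmem v hv).1.2).1)
        rw [heq] at this
        exact cn_pairwise hGQ hab hnab (hWrmem v hv).1.1 (hWrmem v hv).1.2 hw₁a hw₁b
          (hWrmem v hv).2 this
    · obtain ⟨v, hv, heq⟩ := Finset.mem_image.1 h'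
      have := col_third_right ((hall v (hWrmem v hv).1.1 (hWrmem v hv).1.2).2)
      rw [heq] at this
      exact cn_pairwise hGQ hab hnab (hWrmem v hv).1.1 (hWrmem v hv).1.2 hw₁a hw₁b
        (hWrmem v hv).2 this
  have haU : a ∉ insert w₁ (Nb ∪ Nc ∪ Nd) := by
    intro h
    rcases Finset.mem_insert.1 h with h' | h'
    · exact haw₁.ne (h' ▸ rfl)
    rcases Finset.mem_union.1 h' with h'' | h''
    · rcases Finset.mem_union.1 h'' with h3 | h3
      · exact hab ((hmemNb a h3).1.symm)
      · exact hac ((hmemNc a h3).1.symm)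
    · exact hda ((hmemNd a h'').1)
  set N := insert a (insert w₁ (Nb ∪ Nc ∪ Nd)) with hN
  have hNcard : N.card = 3 * t + 2 := by
    rw [hN, Finset.card_insert_of_notMem haU, Finset.card_insert_of_notMem hw₁U, hU]
  have hNcol : ∀ q ∈ N, S.Collinear u₁ q := by
    intro q hq
    rcases Finset.mem_insert.1 hq with rfl | hq'
    · exact hcu₁a
    rcases Finset.mem_insert.1 hq' with rfl | hq''
    · exact hcu₁w
    rcases Finset.mem_union.1 hq'' with h | h
    · rcases Finset.mem_union.1 h with h' | h'
      · exact (hmemNb q h').2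
      · exact (hmemNc q h').2.2
    · exact (hmemNd q h).2.2.2
  have hbound := nbr_bound hGQ u₁ N hNcol
  rw [hNcard] at hbound
  have := t_pos hGQ
  omega

/-- The main configuration lemma: the product point of a 3-arc is distinct
from and collinear with all three points of the arc. -/
lemma mainConfig {a b c d : P} (hab : ¬ S.Collinear a b) (hac : ¬ S.Collinear a c)
    (hbc : ¬ S.Collinear b c) (hnab : a ≠ b) (hnac : a ≠ c) (hnbc : b ≠ c)
    (hrel : ρ.r a * ρ.r b * ρ.r c = ρ.r d) :
    (d ≠ a ∧ d ≠ b ∧ d ≠ c) ∧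
      S.Collinear d a ∧ S.Collinear d b ∧ S.Collinear d c := by
  have hnda : d ≠ a := by
    intro h
    rw [h] at hrel
    have h2 : ρ.r b * ρ.r c = 1 := by
      have h3 := congrArg (fun g => ρ.r a * g) hrel
      simpa only [mul_assoc, r_cancel ρ, r_sq ρ a] using h3
    have h4 : ρ.r b = ρ.r c := by
      rw [← r_inv ρ c]
      exact eq_inv_of_mul_eq_one_left h2
    exact hnbc (hf h4)
  have hndc : d ≠ c := by
    intro h
    rw [h] at hrel
    have h2 : ρ.r a * ρ.r b = 1 := by
      have h3 := congrArg (fun g => g * ρ.r c) hrel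
      simpa only [mul_assoc, r_sq ρ c, mul_one] using h3
    have h4 : ρ.r a = ρ.r b := by
      rw [← r_inv ρ b]
      exact eq_inv_of_mul_eq_one_left h2
    exact hnab (hf h4)
  have hndb : d ≠ b := by
    intro h
    exact caseD hGQ ρ hf hab hac hbc hnab hnac hnbc (h ▸ hrel)
  by_cases hda : S.Collinear d a
  · obtain ⟨hdb, hdc⟩ := lemX hGQ ρ hf hab hac hbc hnab hnac hnbc hrel hda
    exact ⟨⟨hnda, hndb, hndc⟩, hda, hdb, hdc⟩
  by_cases hdc : S.Collinear d c
  · have hrelrev : ρ.r c * ρ.r b * ρ.r a = ρ.r d := by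
      rw [← r_inv ρ d, ← hrel]
      simp only [mul_inv_rev, r_inv, mul_assoc]
    obtain ⟨hdb, hda'⟩ := lemX hGQ ρ hf (ncol_symm hbc) (ncol_symm hac) (ncol_symm hab)
      hnbc.symm hnac.symm hnab.symm hrelrev hdc
    exact ⟨⟨hnda, hndb, hndc⟩, hda', hdb, hdc⟩
  by_cases hdb : S.Collinear d b
  · -- middle case
    have hbd : S.Collinear b d := hdb.symm
    set f' := S.third b d with hf'
    have haf : S.Collinear a f' := by
      have hne1 : a ≠ b := hnab
      have hne2 : a ≠ d := hnda.symm
      have hne3 : a ≠ f' := fun h => hda (show S.Collinear d a by rw [h]; exact col_third_right hbd)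
      rcases gq_cases hGQ hbd hne1 hne2 hne3 with h | h | h
      · exact absurd h hab
      · exact absurd h.symm hda
      · exact h
    have hcf : S.Collinear c f' := by
      have hne1 : c ≠ b := hnbc.symm
      have hne2 : c ≠ d := hndc.symm
      have hne3 : c ≠ f' := fun h => hdc (show S.Collinear d c by rw [h]; exact col_third_right hbd)
      rcases gq_cases hGQ hbd hne1 hne2 hne3 with h | h | h
      · exact absurd h (ncol_symm hbc)
      · exact absurd h.symm hdc
      · exact h
    set g := S.third a f' with hg
    have hrf : ρ.r d * ρ.r b = ρ.r f' := by
      rw [r_third ρ hdb, third_comm hdb]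
    have hrg : ρ.r g = ρ.r b * (ρ.r c * ρ.r b) := by
      rw [← r_third ρ haf, ← hrf, ← hrel]
      simp only [mul_assoc, r_cancel ρ]
    have hDrel : ρ.r g * ρ.r b * ρ.r c = ρ.r b := by
      rw [hrg]
      simp only [mul_assoc, r_cancel ρ, r_sq ρ c, mul_one]
    have hnegb : g ≠ b := by
      intro h
      rw [h] at hrg
      have h2 : ρ.r b * 1 = ρ.r b * (ρ.r c * ρ.r b) := by rw [mul_one]; exact hrg
      have h3 : ρ.r c * ρ.r b = 1 := (mul_left_cancel h2).symm
      have h4 : ρ.r c = ρ.r b := by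
        rw [← r_inv ρ b]
        exact eq_inv_of_mul_eq_one_left h3
      exact hnbc (hf h4).symm
    have hnegc : g ≠ c := fun h => hac (show S.Collinear a c by rw [← h]; exact col_third_left haf)
    have hngb : ¬ S.Collinear g b := by
      intro h
      have hs : ρ.r (S.third g b) = ρ.r b * ρ.r c := by
        rw [← r_third ρ h, hrg]
        simp only [mul_assoc, r_sq ρ b, mul_one]
      have hsq := r_sq ρ (S.third g b)
      rw [hs] at hsq
      have hcommbc : ρ.r b * ρ.r c = ρ.r c * ρ.r b := by
        have h2 : ρ.r b * ρ.r c = (ρ.r b * ρ.r c)⁻¹ := eq_inv_of_mul_eq_one_left hsq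
        rwa [mul_inv_rev, r_inv, r_inv] at h2
      have hgc : ρ.r g = ρ.r c := by
        rw [hrg, ← hcommbc, r_cancel ρ]
      exact hnegc (hf hgc)
    have hngc : ¬ S.Collinear g c := by
      intro h
      have h3 : g = S.third f' c := triangle hGQ hcf.symm (col_third_right haf).symm h
      have h4 : a = S.third f' g := triangle hGQ (col_third_right haf) haf (col_third_left haf)
      have hc_eq : c = S.third f' g :=
        third_eq_of_mem (col_third_right haf) (lineOf_mem hcf.symm)
          (left_mem_lineOf hcf.symm) (by rw [h3]; exact third_mem hcf.symm)
          (right_mem_lineOf hcf.symm) hcf.ne (fun hh => hnegc hh.symm)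
      rw [← hc_eq] at h4
      exact hnac h4
    exact absurd (caseD hGQ ρ hf hngb hngc hbc hnegb hnegc hnbc hDrel) id
  · exact absurd (fourArc hGQ ρ hf hab hac hbc hnab hnac hnbc hrel hda hdb hdc
      hnda hndb hndc) id

end SlimPLS

end RepGeometry4


section RepGeometry5

namespace SlimPLS

variable {P : Type*} {S : SlimPLS P} {t : ℕ} {R : Type*} [Group R]
variable (hGQ : S.IsGQ t) (ρ : S.Rep R) (hf : Function.Injective ρ.r)

include hGQ hf

/-- A 3-arc with its product point has no second centre. -/
lemma secondCenter {a b c d w : P} (hab : ¬ S.Collinear a b) (hac : ¬ S.Collinear a c)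
    (hbc : ¬ S.Collinear b c) (hnab : a ≠ b) (hnac : a ≠ c) (hnbc : b ≠ c)
    (hrel : ρ.r a * ρ.r b * ρ.r c = ρ.r d)
    (hda : S.Collinear d a) (hdb : S.Collinear d b) (hdc : S.Collinear d c)
    (hwa : S.Collinear w a) (hwb : S.Collinear w b) (hwc : S.Collinear w c) :
    w = d := by
  by_contra hne
  have hcdcomm : ρ.r c * ρ.r d = ρ.r d * ρ.r c := r_comm ρ hdc.symm
  have hab_comm : ρ.r a * ρ.r b = ρ.r b * ρ.r a := by
    have h1 : ρ.r a * ρ.r b = ρ.r d * ρ.r c := by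
      rw [← hrel]
      simp only [mul_assoc, r_sq ρ c, mul_one]
    have h3 := congrArg (fun g => g⁻¹) h1
    simp only [mul_inv_rev, r_inv] at h3
    rw [h1, h3, hcdcomm]
  have haw : S.Collinear a w := hwa.symm
  have hcw : S.Collinear c w := hwc.symm
  have hnbz : ¬ S.Collinear b (S.third a w) := by
    intro h
    have h3 := triangle hGQ (col_third_right haw) hwb.symm h
    rw [third_other haw] at h3
    exact hnab h3.symm
  have hnbx : ¬ S.Collinear b (S.third c w) := by
    intro h
    have h3 := triangle hGQ (col_third_right hcw) hwb.symm h
    rw [third_other hcw] at h3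
    exact hnbc h3
  have hnzx : ¬ S.Collinear (S.third a w) (S.third c w) := by
    intro h
    have h3 := triangle hGQ (col_third_right hcw) (col_third_right haw).symm h
    rw [third_other hcw] at h3
    exact hac (by rw [← h3]; exact col_third_left haw)
  have hndw : ¬ S.Collinear d w := by
    intro h
    have h3 : d = S.third a w := triangle hGQ haw hda h
    have h4 : d = S.third b w := triangle hGQ hwb.symm hdb h
    have hbl : b ∈ S.lineOf a w := by
      have hleq : S.lineOf b w = S.lineOf a w :=
        S.unique_line _ (lineOf_mem hwb.symm) _ (lineOf_mem haw) w d
          hne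
          (right_mem_lineOf hwb.symm) (by rw [h4]; exact third_mem hwb.symm)
          (right_mem_lineOf haw) (by rw [h3]; exact third_mem haw)
      rw [← hleq]
      exact left_mem_lineOf hwb.symm
    rw [mem_lineOf_iff haw] at hbl
    rcases hbl with h5 | h5 | h5
    · exact hnab h5.symm
    · exact hwb.ne h5.symm
    · exact hdb.ne (h3.trans h5.symm)
  have hndz : ¬ S.Collinear d (S.third a w) := by
    intro h
    have h3 := triangle hGQ (col_third_left haw) hda h
    rw [third_rotate haw] at h3
    exact hne h3.symm
  have hnebz : b ≠ S.third a w :=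
    fun h => hab (show S.Collinear a b by rw [h]; exact col_third_left haw)
  have hnebx : b ≠ S.third c w :=
    fun h => hbc (show S.Collinear b c by rw [h]; exact (col_third_left hcw).symm)
  have hnezx : S.third a w ≠ S.third c w := by
    intro h
    exact hnac (hf (mul_right_cancel
      (show ρ.r a * ρ.r w = ρ.r c * ρ.r w by rw [r_third ρ haw, r_third ρ hcw, h])))
  have hcwcomm : ρ.r c * ρ.r w = ρ.r w * ρ.r c := r_comm ρ hcw
  have hrel2 : ρ.r b * ρ.r (S.third a w) * ρ.r (S.third c w) = ρ.r d := by
    rw [← r_third ρ haw, ← r_third ρ hcw, ← hrel]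
    simp only [mul_assoc]
    rw [← mul_assoc (ρ.r w) (ρ.r c), ← hcwcomm, mul_assoc, r_sq ρ w, mul_one]
    rw [← mul_assoc, ← hab_comm, mul_assoc]
  have hmc := mainConfig hGQ ρ hf hnbz hnbx hnzx hnebz hnebx hnezx hrel2
  exact hndz hmc.2.2.1

/-- The order parameter is 2. -/
lemma t_eq_two {a b c d : P} (hab : ¬ S.Collinear a b) (hac : ¬ S.Collinear a c)
    (hbc : ¬ S.Collinear b c) (hnab : a ≠ b) (hnac : a ≠ c) (hnbc : b ≠ c)
    (hrel : ρ.r a * ρ.r b * ρ.r c = ρ.r d)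
    (hda : S.Collinear d a) (hdb : S.Collinear d b) (hdc : S.Collinear d c) :
    t = 2 := by
  have hlab : S.lineOf d a ≠ S.lineOf d b := by
    intro h
    exact hab (col_of_mem (lineOf_mem hda) (right_mem_lineOf hda)
      (by rw [h]; exact right_mem_lineOf hdb) hnab)
  have hlac : S.lineOf d a ≠ S.lineOf d c := by
    intro h
    exact hac (col_of_mem (lineOf_mem hda) (right_mem_lineOf hda)
      (by rw [h]; exact right_mem_lineOf hdc) hnac)
  have hlbc : S.lineOf d b ≠ S.lineOf d c := by
    intro h
    exact hbc (col_of_mem (lineOf_mem hdb) (right_mem_lineOf hdb)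
      (by rw [h]; exact right_mem_lineOf hdc) hnbc)
  have ht2 : 2 ≤ t := by
    have hsub : ({S.lineOf d a, S.lineOf d b, S.lineOf d c} : Set (Finset P)) ⊆
        {l | l ∈ S.lines ∧ d ∈ l} := by
      intro l hl
      rcases hl with rfl | rfl | rfl
      · exact ⟨lineOf_mem hda, left_mem_lineOf hda⟩
      · exact ⟨lineOf_mem hdb, left_mem_lineOf hdb⟩
      · exact ⟨lineOf_mem hdc, left_mem_lineOf hdc⟩
    have hcard3 : ({S.lineOf d a, S.lineOf d b, S.lineOf d c} : Set (Finset P)).ncard = 3 := by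
      rw [Set.ncard_insert_of_notMem (by simp [hlab, hlac]),
        Set.ncard_insert_of_notMem (by simp [hlbc]), Set.ncard_singleton]
    have hle := Set.ncard_le_ncard hsub (linesThrough_finite hGQ d)
    rw [hcard3, hGQ.2.2.1 d] at hle
    omega
  by_contra hnet
  have ht3 : 3 ≤ t := by omega
  obtain ⟨l, hl, hdl, hne1, hne2, hne3⟩ :=
    exists_fourth_line hGQ d (S.lineOf d a) (S.lineOf d b) (S.lineOf d c) ht3
  obtain ⟨p, hdp, hlp⟩ := line_two_points hl hdl
  have hq_gen : ∀ q, S.Collinear d q → S.lineOf d q = l →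
      ¬ S.Collinear a q ∧ ¬ S.Collinear b q ∧ ¬ S.Collinear c q := by
    intro q hdq hql
    refine ⟨?_, ?_, ?_⟩
    · intro h
      have h3 := triangle hGQ hdq hda.symm h
      have hmem : a ∈ l := by rw [← hql, h3]; exact third_mem hdq
      exact hne1 (lineOf_unique hda hl hdl hmem)
    · intro h
      have h3 := triangle hGQ hdq hdb.symm h
      have hmem : b ∈ l := by rw [← hql, h3]; exact third_mem hdq
      exact hne2 (lineOf_unique hdb hl hdl hmem)
    · intro h
      have h3 := triangle hGQ hdq hdc.symm h
      have hmem : c ∈ l := by rw [← hql, h3]; exact third_mem hdq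
      exact hne3 (lineOf_unique hdc hl hdl hmem)
  have had : S.Collinear a d := hda.symm
  obtain ⟨l', hl', hal', hl'ne⟩ := exists_other_line hGQ a (S.lineOf a d) (t_pos hGQ)
  have hbl' : b ∉ l' := fun hb => hab (col_of_mem hl' hal' hb hnab)
  obtain ⟨w, ⟨hwl', hbw⟩, _⟩ := hGQ.2.2.2 b l' hl' hbl'
  have hwnea : w ≠ a := fun h => hab (h ▸ hbw).symm
  have hwa : S.Collinear w a := col_of_mem hl' hwl' hal' hwnea
  have hwb : S.Collinear w b := hbw.symm
  have hwc : ¬ S.Collinear w c := by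
    intro h
    have hwd := secondCenter hGQ ρ hf hab hac hbc hnab hnac hnbc hrel hda hdb hdc hwa hwb h
    exact hl'ne (lineOf_unique had hl' hal' (by rw [← hwd]; exact hwl'))
  have hwned : w ≠ d := by
    intro h
    exact hl'ne (lineOf_unique had hl' hal' (by rw [← h]; exact hwl'))
  have hwd : ¬ S.Collinear w d := by
    intro h
    have h3 : w = S.third a d := triangle hGQ had hwa h
    have hnby1 : ¬ S.Collinear b (S.third a d) := by
      intro hh
      have h4 := triangle hGQ (col_third_right had) hdb.symm hh
      rw [third_other had] at h4
      exact hnab h4.symm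
    exact hnby1 (show S.Collinear b (S.third a d) by rw [← h3]; exact hwb.symm)
  obtain ⟨q, hdq, hql, hwq⟩ : ∃ q, S.Collinear d q ∧ S.lineOf d q = l ∧ S.Collinear w q := by
    have hne1' : w ≠ d := hwned
    have hne2' : w ≠ p := fun h => hwd (show S.Collinear w d by rw [h]; exact hdp.symm)
    have hne3' : w ≠ S.third d p :=
      fun h => hwd (show S.Collinear w d by rw [h]; exact (col_third_left hdp).symm)
    rcases gq_cases hGQ hdp hne1' hne2' hne3' with h | h | h
    · exact absurd h hwd
    · exact ⟨p, hdp, hlp.symm, h⟩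
    · refine ⟨S.third d p, col_third_left hdp, ?_, h⟩
      rw [hlp]
      exact (lineOf_unique (col_third_left hdp) (lineOf_mem hdp) (left_mem_lineOf hdp)
        (third_mem hdp)).symm
  obtain ⟨haq, hbq, hcq⟩ := hq_gen q hdq hql
  have hql_mem : q ∈ l := by rw [← hql]; exact right_mem_lineOf hdq
  have hcz : S.Collinear c (S.third w q) := by
    have hne1' : c ≠ w := fun h => hac (show S.Collinear a c by rw [h]; exact hwa.symm)
    have hne2' : c ≠ q := by
      intro h
      exact hne3 (lineOf_unique hdc hl hdl (by rw [← h] at hql_mem; exact hql_mem))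
    have hne3' : c ≠ S.third w q :=
      fun h => hwc (show S.Collinear w c by rw [h]; exact col_third_left hwq)
    rcases gq_cases hGQ hwq hne1' hne2' hne3' with h | h | h
    · exact absurd h.symm hwc
    · exact absurd h hcq
    · exact h
  have hnaz : ¬ S.Collinear a (S.third w q) := by
    intro h
    have h3 := triangle hGQ (col_third_left hwq) hwa.symm h
    rw [third_rotate hwq] at h3
    exact hne1 (lineOf_unique hda hl hdl (by rw [h3]; exact hql_mem))
  have hnbz : ¬ S.Collinear b (S.third w q) := by
    intro h
    have h3 := triangle hGQ (col_third_left hwq) hwb.symm h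
    rw [third_rotate hwq] at h3
    exact hne2 (lineOf_unique hdb hl hdl (by rw [h3]; exact hql_mem))
  have hndz : ¬ S.Collinear d (S.third w q) := by
    intro h
    have h3 := triangle hGQ (col_third_right hwq) hdq h
    rw [third_other hwq] at h3
    exact hwned h3.symm
  have hτa : S.Collinear a (S.third c (S.third w q)) := by
    have hne1' : a ≠ c := hnac
    have hne2' : a ≠ S.third w q :=
      fun h => haq (show S.Collinear a q by rw [h]; exact (col_third_right hwq).symm)
    have hne3' : a ≠ S.third c (S.third w q) :=
      fun h => hac (show S.Collinear a c by rw [h]; exact (col_third_left hcz).symm)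
    rcases gq_cases hGQ hcz hne1' hne2' hne3' with h | h | h
    · exact absurd h hac
    · exact absurd h hnaz
    · exact h
  have hτb : S.Collinear b (S.third c (S.third w q)) := by
    have hne1' : b ≠ c := hnbc
    have hne2' : b ≠ S.third w q :=
      fun h => hbq (show S.Collinear b q by rw [h]; exact (col_third_right hwq).symm)
    have hne3' : b ≠ S.third c (S.third w q) :=
      fun h => hbc (show S.Collinear b c by rw [h]; exact (col_third_left hcz).symm)
    rcases gq_cases hGQ hcz hne1' hne2' hne3' with h | h | h
    · exact absurd h hbc
    · exact absurd h hnbz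
    · exact h
  have hτd := secondCenter hGQ ρ hf hab hac hbc hnab hnac hnbc hrel hda hdb hdc
    hτa.symm hτb.symm (col_third_left hcz).symm
  exact hndz (show S.Collinear d (S.third w q) by rw [← hτd]; exact (col_third_right hcz).symm)

end SlimPLS

end RepGeometry5


section Group16

namespace SlimPLS

/-- Product of a subset of four commuting involutions. -/
def boolProd {R : Type*} [Group R] (g1 g2 g3 g4 : R) (e : Bool × Bool × Bool × Bool) : R :=
  (cond e.1 g1 1) * ((cond e.2.1 g2 1) * ((cond e.2.2.1 g3 1) * (cond e.2.2.2 g4 1)))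

variable {R : Type*} [Group R] {g1 g2 g3 g4 : R}

lemma boolProd_mul (sq1 : g1 * g1 = 1) (sq2 : g2 * g2 = 1) (sq3 : g3 * g3 = 1)
    (sq4 : g4 * g4 = 1)
    (c12 : g1 * g2 = g2 * g1) (c13 : g1 * g3 = g3 * g1) (c14 : g1 * g4 = g4 * g1)
    (c23 : g2 * g3 = g3 * g2) (c24 : g2 * g4 = g4 * g2) (c34 : g3 * g4 = g4 * g3)
    (e e' : Bool × Bool × Bool × Bool) :
    boolProd g1 g2 g3 g4 e * boolProd g1 g2 g3 g4 e' =
      boolProd g1 g2 g3 g4 (e.1.xor e'.1, e.2.1.xor e'.2.1, e.2.2.1.xor e'.2.2.1,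
        e.2.2.2.xor e'.2.2.2) := by
  have p12 : ∀ x : R, g2 * (g1 * x) = g1 * (g2 * x) := fun x => by
    rw [← mul_assoc, ← c12, mul_assoc]
  have p13 : ∀ x : R, g3 * (g1 * x) = g1 * (g3 * x) := fun x => by
    rw [← mul_assoc, ← c13, mul_assoc]
  have p14 : ∀ x : R, g4 * (g1 * x) = g1 * (g4 * x) := fun x => by
    rw [← mul_assoc, ← c14, mul_assoc]
  have p23 : ∀ x : R, g3 * (g2 * x) = g2 * (g3 * x) := fun x => by
    rw [← mul_assoc, ← c23, mul_assoc]
  have p24 : ∀ x : R, g4 * (g2 * x) = g2 * (g4 * x) := fun x => by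
    rw [← mul_assoc, ← c24, mul_assoc]
  have p34 : ∀ x : R, g4 * (g3 * x) = g3 * (g4 * x) := fun x => by
    rw [← mul_assoc, ← c34, mul_assoc]
  have q1 : ∀ x : R, g1 * (g1 * x) = x := fun x => by rw [← mul_assoc, sq1, one_mul]
  have q2 : ∀ x : R, g2 * (g2 * x) = x := fun x => by rw [← mul_assoc, sq2, one_mul]
  have q3 : ∀ x : R, g3 * (g3 * x) = x := fun x => by rw [← mul_assoc, sq3, one_mul]
  have q4 : ∀ x : R, g4 * (g4 * x) = x := fun x => by rw [← mul_assoc, sq4, one_mul]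
  obtain ⟨a1, a2, a3, a4⟩ := e
  obtain ⟨b1, b2, b3, b4⟩ := e'
  simp only [boolProd]
  cases a1 <;> cases a2 <;> cases a3 <;> cases a4 <;> cases b1 <;> cases b2 <;> cases b3 <;>
      cases b4 <;>
    simp [mul_assoc, p12, p13, p14, p23, p24, p34, q1, q2, q3, q4, sq1, sq2, sq3, sq4,
      c12.symm, c13.symm, c14.symm, c23.symm, c24.symm, c34.symm]

end SlimPLS

end Group16


section Endgame

namespace SlimPLS

variable {P : Type*} {S : SlimPLS P} {t : ℕ} {R : Type*} [Group R]

lemma lines_eq_three (hGQ : S.IsGQ t) (ht2 : t = 2) (x : P) {l1 l2 l3 : Finset P}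
    (h1 : l1 ∈ S.lines) (hx1 : x ∈ l1) (h2 : l2 ∈ S.lines) (hx2 : x ∈ l2)
    (h3 : l3 ∈ S.lines) (hx3 : x ∈ l3)
    (h12 : l1 ≠ l2) (h13 : l1 ≠ l3) (h23 : l2 ≠ l3) :
    ∀ l ∈ S.lines, x ∈ l → l = l1 ∨ l = l2 ∨ l = l3 := by
  intro l hl hxl
  by_contra hcon
  push_neg at hcon
  have hsub : ({l, l1, l2, l3} : Set (Finset P)) ⊆ {m | m ∈ S.lines ∧ x ∈ m} := by
    intro m hm
    simp only [Set.mem_insert_iff, Set.mem_singleton_iff] at hm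
    rcases hm with rfl | rfl | rfl | rfl
    · exact ⟨hl, hxl⟩
    · exact ⟨h1, hx1⟩
    · exact ⟨h2, hx2⟩
    · exact ⟨h3, hx3⟩
  have hcard : ({l, l1, l2, l3} : Set (Finset P)).ncard = 4 := by
    rw [Set.ncard_insert_of_notMem (by simp [hcon.1, hcon.2.1, hcon.2.2]),
      Set.ncard_insert_of_notMem (by simp [h12, h13]),
      Set.ncard_insert_of_notMem (by simp [h23]), Set.ncard_singleton]
  have hle := Set.ncard_le_ncard hsub (linesThrough_finite hGQ x)
  rw [hcard, hGQ.2.2.1 x, ht2] at hle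
  omega

variable (hGQ : S.IsGQ t) (ρ : S.Rep R) (hf : Function.Injective ρ.r)

include hGQ hf

lemma endgame {a b c d : P} (hab : ¬ S.Collinear a b) (hac : ¬ S.Collinear a c)
    (hbc : ¬ S.Collinear b c) (hnab : a ≠ b) (hnac : a ≠ c) (hnbc : b ≠ c)
    (hrel : ρ.r a * ρ.r b * ρ.r c = ρ.r d)
    (hda : S.Collinear d a) (hdb : S.Collinear d b) (hdc : S.Collinear d c)
    (ht2 : t = 2) :
    Nat.card R = 2 ^ 4 ∧
      ∃ e : P, e ≠ a ∧ e ≠ b ∧ e ≠ c ∧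
        ¬ S.Collinear a e ∧ ¬ S.Collinear b e ∧ ¬ S.Collinear c e := by
  classical
  have had : S.Collinear a d := hda.symm
  have hbd : S.Collinear b d := hdb.symm
  have hcd : S.Collinear c d := hdc.symm
  -- the noncentral common neighbour w of a and b
  obtain ⟨w, hwa, hwb, hwc, hwned, hwd⟩ :
      ∃ w, S.Collinear w a ∧ S.Collinear w b ∧ ¬ S.Collinear w c ∧ w ≠ d ∧
        ¬ S.Collinear w d := by
    obtain ⟨l', hl', hal', hl'ne⟩ := exists_other_line hGQ a (S.lineOf a d) (t_pos hGQ)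
    have hbl' : b ∉ l' := fun hb => hab (col_of_mem hl' hal' hb hnab)
    obtain ⟨w, ⟨hwl', hbw⟩, _⟩ := hGQ.2.2.2 b l' hl' hbl'
    have hwnea : w ≠ a := fun h => hab (h ▸ hbw).symm
    have hwa : S.Collinear w a := col_of_mem hl' hwl' hal' hwnea
    have hwb : S.Collinear w b := hbw.symm
    have hwc : ¬ S.Collinear w c := by
      intro h
      have hwd := secondCenter hGQ ρ hf hab hac hbc hnab hnac hnbc hrel hda hdb hdc hwa hwb h
      exact hl'ne (lineOf_unique had hl' hal' (by rw [← hwd]; exact hwl'))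
    have hwned : w ≠ d := by
      intro h
      exact hl'ne (lineOf_unique had hl' hal' (by rw [← h]; exact hwl'))
    have hwd : ¬ S.Collinear w d := by
      intro h
      have h3 : w = S.third a d := triangle hGQ had hwa h
      have hnby1 : ¬ S.Collinear b (S.third a d) := by
        intro hh
        have h4 := triangle hGQ (col_third_right had) hdb.symm hh
        rw [third_other had] at h4
        exact hnab h4.symm
      exact hnby1 (show S.Collinear b (S.third a d) by rw [← h3]; exact hwb.symm)
    exact ⟨w, hwa, hwb, hwc, hwned, hwd⟩
  have haw : S.Collinear a w := hwa.symm
  have hbw : S.Collinear b w := hwb.symm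
  -- named third points
  set y1 := S.third a d with hy1
  set y2 := S.third b d with hy2
  set y3 := S.third c d with hy3
  set u₁ := S.third a w with hu₁
  set u' := S.third b w with hu'
  -- commutators
  have hcdcomm : ρ.r c * ρ.r d = ρ.r d * ρ.r c := r_comm ρ hcd
  have hadcomm : ρ.r a * ρ.r d = ρ.r d * ρ.r a := r_comm ρ had
  have hbdcomm : ρ.r b * ρ.r d = ρ.r d * ρ.r b := r_comm ρ hbd
  have hawcomm : ρ.r a * ρ.r w = ρ.r w * ρ.r a := r_comm ρ haw
  have hbwcomm : ρ.r b * ρ.r w = ρ.r w * ρ.r b := r_comm ρ hbw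
  have habcomm : ρ.r a * ρ.r b = ρ.r b * ρ.r a := by
    have h1 : ρ.r a * ρ.r b = ρ.r d * ρ.r c := by
      rw [← hrel]
      simp only [mul_assoc, r_sq ρ c, mul_one]
    have h3 := congrArg (fun g => g⁻¹) h1
    simp only [mul_inv_rev, r_inv] at h3
    rw [h1, h3]
    exact hcdcomm.symm
  have hbccomm : ρ.r b * ρ.r c = ρ.r c * ρ.r b := by
    have h1 : ρ.r b * ρ.r c = ρ.r a * ρ.r d := by
      rw [← hrel]
      simp only [mul_assoc, r_cancel ρ]
    have h3 := congrArg (fun g => g⁻¹) h1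
    simp only [mul_inv_rev, r_inv] at h3
    rw [h1, h3]
    exact hadcomm
  have push_ab : ∀ Z : R, ρ.r b * (ρ.r a * Z) = ρ.r a * (ρ.r b * Z) := fun Z => by
    rw [← mul_assoc, ← habcomm, mul_assoc]
  have h1ac : ρ.r a * ρ.r c = ρ.r b * ρ.r d := by
    rw [← hrel]
    simp only [mul_assoc]
    rw [push_ab, r_cancel ρ]
  have haccomm : ρ.r a * ρ.r c = ρ.r c * ρ.r a := by
    have h3 := congrArg (fun g => g⁻¹) h1ac
    simp only [mul_inv_rev, r_inv] at h3
    rw [h1ac, h3]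
    exact hbdcomm
  have push_ac : ∀ Z : R, ρ.r c * (ρ.r a * Z) = ρ.r a * (ρ.r c * Z) := fun Z => by
    rw [← mul_assoc, ← haccomm, mul_assoc]
  -- geometry around u₁
  have hnecw : c ≠ w := fun h => hac (show S.Collinear a c by rw [h]; exact haw)
  have hcu₁ : S.Collinear c u₁ := by
    have hne3 : c ≠ u₁ := fun h => hwc (show S.Collinear w c by rw [h]; exact col_third_right haw)
    rcases gq_cases hGQ haw hnac.symm hnecw hne3 with h | h | h
    · exact absurd h (ncol_symm hac)
    · exact absurd h.symm hwc
    · exact h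
  have hnbu₁ : ¬ S.Collinear b u₁ := by
    intro h
    have h3 := triangle hGQ (col_third_right haw) hbw h
    rw [third_other haw] at h3
    exact hnab h3.symm
  have hndu₁ : ¬ S.Collinear d u₁ := by
    intro h
    have h3 := triangle hGQ (col_third_left haw) hda h
    rw [third_rotate haw] at h3
    exact hwned h3.symm
  set p := S.third c u₁ with hp
  have hbp : S.Collinear b p := by
    have hne2 : b ≠ u₁ := fun h => hab (show S.Collinear a b by rw [h]; exact col_third_left haw)
    have hne3 : b ≠ p := fun h => (ncol_symm hbc)
      (show S.Collinear c b by rw [h]; exact col_third_left hcu₁)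
    rcases gq_cases hGQ hcu₁ hnbc hne2 hne3 with h | h | h
    · exact absurd h hbc
    · exact absurd h hnbu₁
    · exact h
  have hnap : ¬ S.Collinear a p := by
    intro h
    have h3 := triangle hGQ (col_third_right hcu₁) (col_third_left haw) h
    rw [third_other hcu₁] at h3
    exact hnac h3
  set e' := S.third b p with he'
  have hae' : S.Collinear a e' := by
    have hne2 : a ≠ p := fun h => hac
      ((show S.Collinear c a by rw [h]; exact col_third_left hcu₁)).symm
    have hne3 : a ≠ e' := fun h => hab (show S.Collinear a b by rw [h]; exact (col_third_left hbp).symm)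
    rcases gq_cases hGQ hbp hnab hne2 hne3 with h | h | h
    · exact absurd h hab
    · exact absurd h hnap
    · exact h
  set τ := S.third a e' with hτ
  -- key relation values
  have Hu1 : ρ.r u₁ = ρ.r a * ρ.r w := by rw [hu₁]; exact (r_third ρ haw).symm
  have Hu' : ρ.r u' = ρ.r b * ρ.r w := by rw [hu']; exact (r_third ρ hbw).symm
  have Hd : ρ.r d = ρ.r a * (ρ.r b * ρ.r c) := by rw [← hrel, mul_assoc]
  have Hy1 : ρ.r y1 = ρ.r b * ρ.r c := by
    rw [hy1, ← r_third ρ had, ← hrel]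
    simp only [mul_assoc, r_cancel ρ]
  have Hy2 : ρ.r y2 = ρ.r a * ρ.r c := by
    rw [hy2, ← r_third ρ hbd]
    exact h1ac.symm
  have Hy3 : ρ.r y3 = ρ.r a * ρ.r b := by
    have h1 : ρ.r a * ρ.r b = ρ.r d * ρ.r c := by
      rw [← hrel]
      simp only [mul_assoc, r_sq ρ c, mul_one]
    rw [hy3, ← r_third ρ hcd, h1]
    exact hcdcomm
  have Hp : ρ.r p = ρ.r a * (ρ.r c * ρ.r w) := by
    rw [hp, ← r_third ρ hcu₁, Hu1, push_ac]
  have He'2 : ρ.r e' = ρ.r a * (ρ.r b * (ρ.r c * ρ.r w)) := by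
    rw [he', ← r_third ρ hbp, Hp, push_ab]
  have He'd : ρ.r e' = ρ.r d * ρ.r w := by
    rw [He'2, ← hrel]
    simp only [mul_assoc]
  have hdwcomm : ρ.r d * ρ.r w = ρ.r w * ρ.r d := by
    have hsqe' := r_sq ρ e'
    rw [He'd] at hsqe'
    have h2 : ρ.r d * ρ.r w = (ρ.r d * ρ.r w)⁻¹ := eq_inv_of_mul_eq_one_left hsqe'
    rwa [mul_inv_rev, r_inv, r_inv] at h2
  have hc_eq : ρ.r c = ρ.r a * (ρ.r b * ρ.r d) := by
    rw [← hrel]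
    simp only [mul_assoc]
    rw [push_ab, r_cancel ρ, r_cancel ρ]
  have hcwcomm : ρ.r c * ρ.r w = ρ.r w * ρ.r c := by
    rw [hc_eq]
    simp only [mul_assoc]
    rw [hdwcomm, ← mul_assoc (ρ.r b) (ρ.r w), hbwcomm, mul_assoc,
      ← mul_assoc (ρ.r a) (ρ.r w), hawcomm, mul_assoc]
  have Hτ : ρ.r τ = ρ.r b * (ρ.r c * ρ.r w) := by
    rw [hτ, ← r_third ρ hae', He'2, r_cancel ρ]
  -- the extension point
  have hwy3 : S.Collinear w y3 := by
    have hne3 : w ≠ y3 := fun h => hwd (show S.Collinear w d by rw [h]; exact (col_third_right hcd).symm)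
    rcases gq_cases hGQ hcd hnecw.symm hwned hne3 with h | h | h
    · exact absurd h hwc
    · exact absurd h hwd
    · exact h
  set eext := S.third w y3 with heext
  have Hee : ρ.r eext = ρ.r a * (ρ.r b * ρ.r w) := by
    rw [heext, ← r_third ρ hwy3, Hy3, ← mul_assoc, ← hawcomm, mul_assoc, ← hbwcomm]
  have hwee : S.Collinear w eext := by rw [heext]; exact col_third_left hwy3
  have hy3ee : S.Collinear y3 eext := by rw [heext]; exact col_third_right hwy3
  have hcy3 : S.Collinear c y3 := by rw [hy3]; exact col_third_left hcd
  have h3rot : S.third w eext = y3 := by rw [heext]; exact third_rotate hwy3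
  have h3oth : S.third y3 eext = w := by rw [heext]; exact third_other hwy3
  have hnaee : ¬ S.Collinear a eext := by
    intro h
    have h3 := triangle hGQ hwee haw h
    rw [h3rot] at h3
    exact hac (show S.Collinear a c by rw [h3]; exact hcy3.symm)
  have hnbee : ¬ S.Collinear b eext := by
    intro h
    have h3 := triangle hGQ hwee hbw h
    rw [h3rot] at h3
    exact hbc (show S.Collinear b c by rw [h3]; exact hcy3.symm)
  have hncee : ¬ S.Collinear c eext := by
    intro h
    have h3 := triangle hGQ hy3ee hcy3 h
    rw [h3oth] at h3
    exact hnecw h3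
  -- γ
  have hu₁y2 : S.Collinear u₁ y2 := by
    have hne1 : u₁ ≠ b := fun h => hab (show S.Collinear a b by rw [← h]; exact col_third_left haw)
    have hne2 : u₁ ≠ d := fun h => hwd (show S.Collinear w d by rw [← h]; exact col_third_right haw)
    have hne3 : u₁ ≠ y2 := fun h => hndu₁ (show S.Collinear d u₁ by rw [h]; exact col_third_right hbd)
    rcases gq_cases hGQ hbd hne1 hne2 hne3 with h | h | h
    · exact absurd h (ncol_symm hnbu₁)
    · exact absurd h (ncol_symm hndu₁)
    · exact h
  set γ := S.third u₁ y2 with hγ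
  have Hγ : ρ.r γ = ρ.r c * ρ.r w := by
    rw [hγ, ← r_third ρ hu₁y2, Hu1, Hy2]
    simp only [mul_assoc]
    rw [← mul_assoc (ρ.r w) (ρ.r a), ← hawcomm, mul_assoc, r_cancel ρ]
    exact hcwcomm.symm
  -- canonical collinearity facts
  have hau₁ : S.Collinear a u₁ := by rw [hu₁]; exact col_third_left haw
  have hu₁a : S.Collinear u₁ a := hau₁.symm
  have hu₁c : S.Collinear u₁ c := hcu₁.symm
  -- third-point identities in folded form
  have hthird_wa : S.third w a = u₁ := by rw [hu₁]; exact (third_comm haw).symm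
  have hthird_wb : S.third w b = u' := by rw [hu']; exact (third_comm hbw).symm
  have hthird_wy3 : S.third w y3 = eext := by rw [heext]
  have hthird_u₁a : S.third u₁ a = w := by
    rw [third_comm hu₁a, hu₁]
    exact third_rotate haw
  have hthird_u₁c : S.third u₁ c = p := by rw [third_comm hu₁c, ← hp]
  have hthird_u₁y2 : S.third u₁ y2 = γ := by rw [← hγ]
  -- the group of order 16
  set F := boolProd (ρ.r a) (ρ.r b) (ρ.r c) (ρ.r w) with hF
  have hmul : ∀ e e' : Bool × Bool × Bool × Bool, F e * F e' =
      F (e.1.xor e'.1, e.2.1.xor e'.2.1, e.2.2.1.xor e'.2.2.1, e.2.2.2.xor e'.2.2.2) := by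
    intro e e'
    rw [hF]
    exact boolProd_mul (r_sq ρ a) (r_sq ρ b) (r_sq ρ c) (r_sq ρ w)
      habcomm haccomm hawcomm hbccomm hbwcomm hcwcomm e e'
  have hF0 : F (false, false, false, false) = 1 := by rw [hF]; simp [boolProd]
  have hsqF : ∀ e0, F e0 * F e0 = 1 := by
    intro e0
    rw [hmul]
    simp only [Bool.xor_self]
    exact hF0
  have Fa : F (true, false, false, false) = ρ.r a := by rw [hF]; simp [boolProd]
  have Fb : F (false, true, false, false) = ρ.r b := by rw [hF]; simp [boolProd]
  have Fc : F (false, false, true, false) = ρ.r c := by rw [hF]; simp [boolProd]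
  have Fw : F (false, false, false, true) = ρ.r w := by rw [hF]; simp [boolProd]
  have Fy3 : F (true, true, false, false) = ρ.r y3 := by
    rw [hF]; simp [boolProd]; exact Hy3.symm
  have Fy2 : F (true, false, true, false) = ρ.r y2 := by
    rw [hF]; simp [boolProd]; exact Hy2.symm
  have Fy1 : F (false, true, true, false) = ρ.r y1 := by
    rw [hF]; simp [boolProd]; exact Hy1.symm
  have Fd : F (true, true, true, false) = ρ.r d := by
    rw [hF]; simp [boolProd]; exact Hd.symm
  have Fu1 : F (true, false, false, true) = ρ.r u₁ := by
    rw [hF]; simp [boolProd]; exact Hu1.symm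
  have Fu' : F (false, true, false, true) = ρ.r u' := by
    rw [hF]; simp [boolProd]; exact Hu'.symm
  have Fγ : F (false, false, true, true) = ρ.r γ := by
    rw [hF]; simp [boolProd]; exact Hγ.symm
  have Fp : F (true, false, true, true) = ρ.r p := by
    rw [hF]; simp [boolProd]; exact Hp.symm
  have Fee : F (true, true, false, true) = ρ.r eext := by
    rw [hF]; simp [boolProd]; exact Hee.symm
  have Fτ : F (false, true, true, true) = ρ.r τ := by
    rw [hF]; simp [boolProd]; exact Hτ.symm
  have Fe' : F (true, true, true, true) = ρ.r e' := by
    rw [hF]; simp [boolProd]; exact He'2.symm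
  have hneF : ∀ e0 : Bool × Bool × Bool × Bool, F e0 = 1 → e0 = (false, false, false, false) := by
    rintro ⟨e1, e2, e3, e4⟩ hh
    rw [hF] at hh
    simp only [boolProd] at hh
    cases e1 <;> cases e2 <;> cases e3 <;> cases e4 <;>
        simp only [cond_true, cond_false, one_mul, mul_one] at hh ⊢
    · exact absurd hh (r_ne_one ρ w)
    · exact absurd hh (r_ne_one ρ c)
    · exact absurd (Hγ.trans hh) (r_ne_one ρ γ)
    · exact absurd hh (r_ne_one ρ b)
    · exact absurd (Hu'.trans hh) (r_ne_one ρ u')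
    · exact absurd (Hy1.trans hh) (r_ne_one ρ y1)
    · exact absurd (Hτ.trans hh) (r_ne_one ρ τ)
    · exact absurd hh (r_ne_one ρ a)
    · exact absurd (Hu1.trans hh) (r_ne_one ρ u₁)
    · exact absurd (Hy2.trans hh) (r_ne_one ρ y2)
    · exact absurd (Hp.trans hh) (r_ne_one ρ p)
    · exact absurd (Hy3.trans hh) (r_ne_one ρ y3)
    · exact absurd (Hee.trans hh) (r_ne_one ρ eext)
    · exact absurd (Hd.trans hh) (r_ne_one ρ d)
    · exact absurd (He'2.trans hh) (r_ne_one ρ e')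
  have hinjF : Function.Injective F := by
    intro e e' hh
    have h0 : F (e.1.xor e'.1, e.2.1.xor e'.2.1, e.2.2.1.xor e'.2.2.1, e.2.2.2.xor e'.2.2.2) = 1 := by
      rw [← hmul e e', hh]
      exact hsqF e'
    have h1 := hneF _ h0
    obtain ⟨a1, a2, a3, a4⟩ := e
    obtain ⟨b1, b2, b3, b4⟩ := e'
    simp only [Prod.mk.injEq] at h1 ⊢
    have hx : ∀ x y : Bool, x.xor y = false → x = y := by decide
    exact ⟨hx _ _ h1.1, hx _ _ h1.2.1, hx _ _ h1.2.2.1, hx _ _ h1.2.2.2⟩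
  have hPtNe : ∀ (x y : P) (ex ey : Bool × Bool × Bool × Bool),
      F ex = ρ.r x → F ey = ρ.r y → ex ≠ ey → x ≠ y := by
    intro x y ex ey hx hy hexy hxy
    exact hexy (hinjF (by rw [hx, hy, hxy]))
  -- classification of the lines through a, w, u₁
  have hA12 : S.lineOf a d ≠ S.lineOf a w := by
    intro h
    have hm : w ∈ S.lineOf a d := by rw [h]; exact right_mem_lineOf haw
    rw [mem_lineOf_iff had] at hm
    rcases hm with h' | h' | h'
    · exact haw.ne h'.symm
    · exact hwned h'
    · rw [← hy1] at h'
      exact hPtNe w y1 _ _ Fw Fy1 (by decide) h'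
  have hA13 : S.lineOf a d ≠ S.lineOf a e' := by
    intro h
    have hm : e' ∈ S.lineOf a d := by rw [h]; exact right_mem_lineOf hae'
    rw [mem_lineOf_iff had] at hm
    rcases hm with h' | h' | h'
    · exact hae'.ne h'.symm
    · exact hPtNe e' d _ _ Fe' Fd (by decide) h'
    · rw [← hy1] at h'
      exact hPtNe e' y1 _ _ Fe' Fy1 (by decide) h'
  have hA23 : S.lineOf a w ≠ S.lineOf a e' := by
    intro h
    have hm : e' ∈ S.lineOf a w := by rw [h]; exact right_mem_lineOf hae'
    rw [mem_lineOf_iff haw] at hm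
    rcases hm with h' | h' | h'
    · exact hae'.ne h'.symm
    · exact hPtNe e' w _ _ Fe' Fw (by decide) h'
    · rw [← hu₁] at h'
      exact hPtNe e' u₁ _ _ Fe' Fu1 (by decide) h'
  have hClassA := lines_eq_three hGQ ht2 a (lineOf_mem had) (left_mem_lineOf had)
    (lineOf_mem haw) (left_mem_lineOf haw) (lineOf_mem hae') (left_mem_lineOf hae')
    hA12 hA13 hA23
  have hW12 : S.lineOf w a ≠ S.lineOf w b := by
    intro h
    have hm : b ∈ S.lineOf w a := by rw [h]; exact right_mem_lineOf hwb
    rw [mem_lineOf_iff hwa] at hm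
    rcases hm with h' | h' | h'
    · exact hwb.ne h'.symm
    · exact hnab h'.symm
    · rw [hthird_wa] at h'
      exact hPtNe b u₁ _ _ Fb Fu1 (by decide) h'
  have hW13 : S.lineOf w a ≠ S.lineOf w y3 := by
    intro h
    have hm : y3 ∈ S.lineOf w a := by rw [h]; exact right_mem_lineOf hwy3
    rw [mem_lineOf_iff hwa] at hm
    rcases hm with h' | h' | h'
    · exact hwy3.ne h'.symm
    · exact hPtNe y3 a _ _ Fy3 Fa (by decide) h'
    · rw [hthird_wa] at h'
      exact hPtNe y3 u₁ _ _ Fy3 Fu1 (by decide) h'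
  have hW23 : S.lineOf w b ≠ S.lineOf w y3 := by
    intro h
    have hm : y3 ∈ S.lineOf w b := by rw [h]; exact right_mem_lineOf hwy3
    rw [mem_lineOf_iff hwb] at hm
    rcases hm with h' | h' | h'
    · exact hwy3.ne h'.symm
    · exact hPtNe y3 b _ _ Fy3 Fb (by decide) h'
    · rw [hthird_wb] at h'
      exact hPtNe y3 u' _ _ Fy3 Fu' (by decide) h'
  have hClassW := lines_eq_three hGQ ht2 w (lineOf_mem hwa) (left_mem_lineOf hwa)
    (lineOf_mem hwb) (left_mem_lineOf hwb) (lineOf_mem hwy3) (left_mem_lineOf hwy3)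
    hW12 hW13 hW23
  have hU12 : S.lineOf u₁ a ≠ S.lineOf u₁ c := by
    intro h
    have hm : c ∈ S.lineOf u₁ a := by rw [h]; exact right_mem_lineOf hu₁c
    rw [mem_lineOf_iff hu₁a] at hm
    rcases hm with h' | h' | h'
    · exact hu₁c.ne h'.symm
    · exact hnac h'.symm
    · rw [hthird_u₁a] at h'
      exact hnecw h'
  have hU13 : S.lineOf u₁ a ≠ S.lineOf u₁ y2 := by
    intro h
    have hm : y2 ∈ S.lineOf u₁ a := by rw [h]; exact right_mem_lineOf hu₁y2
    rw [mem_lineOf_iff hu₁a] at hm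
    rcases hm with h' | h' | h'
    · exact hu₁y2.ne h'.symm
    · exact hPtNe y2 a _ _ Fy2 Fa (by decide) h'
    · rw [hthird_u₁a] at h'
      exact hPtNe y2 w _ _ Fy2 Fw (by decide) h'
  have hU23 : S.lineOf u₁ c ≠ S.lineOf u₁ y2 := by
    intro h
    have hm : y2 ∈ S.lineOf u₁ c := by rw [h]; exact right_mem_lineOf hu₁y2
    rw [mem_lineOf_iff hu₁c] at hm
    rcases hm with h' | h' | h'
    · exact hu₁y2.ne h'.symm
    · exact hPtNe y2 c _ _ Fy2 Fc (by decide) h'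
    · rw [hthird_u₁c] at h'
      exact hPtNe y2 p _ _ Fy2 Fp (by decide) h'
  have hClassU := lines_eq_three hGQ ht2 u₁ (lineOf_mem hu₁a) (left_mem_lineOf hu₁a)
    (lineOf_mem hu₁c) (left_mem_lineOf hu₁c) (lineOf_mem hu₁y2) (left_mem_lineOf hu₁y2)
    hU12 hU13 hU23
  -- coverage
  have hcover : ∀ v : P, ∃ e0, F e0 = ρ.r v := by
    intro v
    rcases eq_or_ne v a with rfl | hva
    · exact ⟨_, Fa⟩
    rcases eq_or_ne v w with rfl | hvw
    · exact ⟨_, Fw⟩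
    rcases eq_or_ne v u₁ with rfl | hvu
    · exact ⟨_, Fu1⟩
    by_cases hcol : S.Collinear a v
    · rcases hClassA (S.lineOf a v) (lineOf_mem hcol) (left_mem_lineOf hcol) with h | h | h
      · have hvmem : v ∈ S.lineOf a d := by rw [← h]; exact right_mem_lineOf hcol
        rw [mem_lineOf_iff had] at hvmem
        rcases hvmem with rfl | rfl | h'
        · exact absurd rfl hva
        · exact ⟨_, Fd⟩
        · rw [← hy1] at h'
          subst h'
          exact ⟨_, Fy1⟩
      · have hvmem : v ∈ S.lineOf a w := by rw [← h]; exact right_mem_lineOf hcol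
        rw [mem_lineOf_iff haw] at hvmem
        rcases hvmem with rfl | rfl | h'
        · exact absurd rfl hva
        · exact absurd rfl hvw
        · rw [← hu₁] at h'
          exact absurd h' hvu
      · have hvmem : v ∈ S.lineOf a e' := by rw [← h]; exact right_mem_lineOf hcol
        rw [mem_lineOf_iff hae'] at hvmem
        rcases hvmem with rfl | rfl | h'
        · exact absurd rfl hva
        · exact ⟨_, Fe'⟩
        · rw [← hτ] at h'
          subst h'
          exact ⟨_, Fτ⟩
    · have hvnu : v ≠ S.third a w := by rw [← hu₁]; exact hvu
      rcases gq_cases hGQ haw hva hvw hvnu with h | h | h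
      · exact absurd h.symm hcol
      · have hwv : S.Collinear w v := h.symm
        rcases hClassW (S.lineOf w v) (lineOf_mem hwv) (left_mem_lineOf hwv) with h1 | h1 | h1
        · have hvmem : v ∈ S.lineOf w a := by rw [← h1]; exact right_mem_lineOf hwv
          rw [mem_lineOf_iff hwa] at hvmem
          rcases hvmem with rfl | rfl | h'
          · exact absurd rfl hvw
          · exact absurd rfl hva
          · rw [hthird_wa] at h'
            exact absurd h' hvu
        · have hvmem : v ∈ S.lineOf w b := by rw [← h1]; exact right_mem_lineOf hwv
          rw [mem_lineOf_iff hwb] at hvmem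
          rcases hvmem with rfl | rfl | h'
          · exact absurd rfl hvw
          · exact ⟨_, Fb⟩
          · rw [hthird_wb] at h'
            subst h'
            exact ⟨_, Fu'⟩
        · have hvmem : v ∈ S.lineOf w y3 := by rw [← h1]; exact right_mem_lineOf hwv
          rw [mem_lineOf_iff hwy3] at hvmem
          rcases hvmem with rfl | rfl | h'
          · exact absurd rfl hvw
          · exact ⟨_, Fy3⟩
          · rw [hthird_wy3] at h'
            subst h'
            exact ⟨_, Fee⟩
      · have hu₁v : S.Collinear u₁ v := by rw [hu₁]; exact h.symm
        rcases hClassU (S.lineOf u₁ v) (lineOf_mem hu₁v) (left_mem_lineOf hu₁v) with h1 | h1 | h1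
        · have hvmem : v ∈ S.lineOf u₁ a := by rw [← h1]; exact right_mem_lineOf hu₁v
          rw [mem_lineOf_iff hu₁a] at hvmem
          rcases hvmem with rfl | rfl | h'
          · exact absurd rfl hvu
          · exact absurd rfl hva
          · rw [hthird_u₁a] at h'
            exact absurd h' hvw
        · have hvmem : v ∈ S.lineOf u₁ c := by rw [← h1]; exact right_mem_lineOf hu₁v
          rw [mem_lineOf_iff hu₁c] at hvmem
          rcases hvmem with rfl | rfl | h'
          · exact absurd rfl hvu
          · exact ⟨_, Fc⟩
          · rw [hthird_u₁c] at h'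
            subst h'
            exact ⟨_, Fp⟩
        · have hvmem : v ∈ S.lineOf u₁ y2 := by rw [← h1]; exact right_mem_lineOf hu₁v
          rw [mem_lineOf_iff hu₁y2] at hvmem
          rcases hvmem with rfl | rfl | h'
          · exact absurd rfl hvu
          · exact ⟨_, Fy2⟩
          · rw [hthird_u₁y2] at h'
            subst h'
            exact ⟨_, Fγ⟩
  -- assemble
  let H : Subgroup R :=
    { carrier := Set.range F
      mul_mem' := by
        rintro x y ⟨e, rfl⟩ ⟨e', rfl⟩
        exact ⟨_, (hmul e e').symm⟩
      one_mem' := ⟨(false, false, false, false), hF0⟩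
      inv_mem' := by
        rintro x ⟨e, rfl⟩
        exact ⟨e, (inv_eq_of_mul_eq_one_right (hsqF e)).symm⟩ }
  have hsurj : Function.Surjective F := by
    intro x
    have hx : x ∈ Subgroup.closure (Set.range ρ.r) := by rw [ρ.gen]; trivial
    have hle : Subgroup.closure (Set.range ρ.r) ≤ H := by
      rw [Subgroup.closure_le]
      rintro y ⟨v, rfl⟩
      exact hcover v
    exact hle hx
  constructor
  · have hcard := Nat.card_eq_of_bijective F ⟨hinjF, hsurj⟩
    rw [← hcard, Nat.card_eq_fintype_card]
    rfl
  · refine ⟨eext, ?_, ?_, ?_, hnaee, hnbee, hncee⟩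
    · exact hPtNe eext a _ _ Fee Fa (by decide)
    · exact hPtNe eext b _ _ Fee Fb (by decide)
    · exact hPtNe eext c _ _ Fee Fc (by decide)

end SlimPLS

end Endgame


/-- For a faithful representation of a `(2,t)`-GQ, if `S` contains
a 3-arc `{a,b,c}` with `r_a r_b r_c ∈ R_ψ`, then `t = 2`, `|R| = 2^4`, and the
3-arc is incomplete. -/
theorem gq_rep_arc_product_in_image {P : Type*} (S : SlimPLS P) {t : ℕ}
    (hGQ : S.IsGQ t) {R : Type*} [Group R] (ρ : S.Rep R)
    (hf : Function.Injective ρ.r)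
    (a b c : P) (hab : a ≠ b) (hac : a ≠ c) (hbc : b ≠ c)
    (harc : S.IsArc {a, b, c})
    (h : ρ.r a * ρ.r b * ρ.r c ∈ Set.range ρ.r) :
    t = 2 ∧ Nat.card R = 2 ^ 4 ∧
      ∃ d : P, d ∉ ({a, b, c} : Set P) ∧ S.IsArc (insert d {a, b, c}) := by
  obtain ⟨d, hd⟩ := h
  have hrel : ρ.r a * ρ.r b * ρ.r c = ρ.r d := hd.symm
  have hab' : ¬ S.Collinear a b := harc a (by simp) b (by simp) hab
  have hac' : ¬ S.Collinear a c := harc a (by simp) c (by simp) hac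
  have hbc' : ¬ S.Collinear b c := harc b (by simp) c (by simp) hbc
  obtain ⟨⟨hnda, hndb, hndc⟩, hda, hdb, hdc⟩ :=
    SlimPLS.mainConfig hGQ ρ hf hab' hac' hbc' hab hac hbc hrel
  have ht2 := SlimPLS.t_eq_two hGQ ρ hf hab' hac' hbc' hab hac hbc hrel hda hdb hdc
  obtain ⟨hcard, e, hea, heb, hec, hnae, hnbe, hnce⟩ :=
    SlimPLS.endgame hGQ ρ hf hab' hac' hbc' hab hac hbc hrel hda hdb hdc ht2
  refine ⟨ht2, hcard, e, ?_, ?_⟩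
  · simp only [Set.mem_insert_iff, Set.mem_singleton_iff]
    push_neg
    exact ⟨hea, heb, hec⟩
  · intro x hx y hy hxy
    simp only [Set.mem_insert_iff, Set.mem_singleton_iff] at hx hy
    rcases hx with rfl | rfl | rfl | rfl <;> rcases hy with rfl | rfl | rfl | rfl <;>
      first
        | exact absurd rfl hxy
        | exact hnae
        | exact hnbe
        | exact hnce
        | exact SlimPLS.ncol_symm hnae
        | exact SlimPLS.ncol_symm hnbe
        | exact SlimPLS.ncol_symm hnce
        | exact hab'
        | exact hac'
        | exact hbc'
        | exact SlimPLS.ncol_symm hab'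
        | exact SlimPLS.ncol_symm hac'
        | exact SlimPLS.ncol_symm hbc'
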